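/- arXiv:0707.3860 — 12 statements merged into one kernel-verified Lean document; each statement's English description precedes it below -/
import Mathlib

section
/- If $(X_n)_{n\in\mathbf{Z}}$ is a constructive Markov chain with $X_{n+1}=f_n(X_n,V_{n+1})$ where each $V_{n+1}$ is independent of $((X_k,V_k))_{k\le n}$, then the asymptotic sigma-fields coincide: $\bigcap_{n} \mathcal{F}_n^{(X,V)} = \bigcap_n \mathcal{F}_n^X$ (up to null sets). -/
/-!
Write `𝓕ₙ = σ(X_k : k ≤ n)`, `𝓖ₙ = σ(X_k, V_k : k ≤ n)` and `𝓦ₙ = σ(V_k : k > n)`. Iterating the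
recursion, every `X_k` is `𝓕ₙ ⊔ 𝓦ₙ`-measurable, so `𝓗ₙ = 𝓕ₙ ⊔ 𝓦ₙ` decreases in `n` and `⨆ₙ 𝓗ₙ ⊇ 𝓖₀`;
the independence of each innovation from the past propagates to `𝓦ₙ ⊥ 𝓖ₙ`. For `A ∈ ⋂ₙ 𝓖ₙ`
this gives `P[A | 𝓗ₙ] = P[A | 𝓕ₙ]`, so by Lévy's upward theorem along `𝓗₋ₖ` we get
`P[A | 𝓕₋ₖ] → 1_A` a.s., and the set where this limit is `1` lies in `⋂ₙ 𝓕ₙ`.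
-/

open MeasureTheory ProbabilityTheory Filter Topology
open scoped symmDiff

section IndepSup

variable {Ω : Type*} {m0 : MeasurableSpace Ω} {μ : Measure Ω}

lemma MeasurableSpace.sup_eq_generateFrom_image2_inter (m₁ m₂ : MeasurableSpace Ω) :
    m₁ ⊔ m₂ = generateFrom
      (Set.image2 (· ∩ ·) {s | MeasurableSet[m₁] s} {s | MeasurableSet[m₂] s}) := by
  refine le_antisymm (sup_le ?_ ?_) (generateFrom_le ?_)
  · exact fun s hs => measurableSet_generateFrom ⟨s, hs, _, .univ, Set.inter_univ s⟩
  · exact fun s hs => measurableSet_generateFrom ⟨_, .univ, s, hs, Set.univ_inter s⟩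
  · rintro _ ⟨a, ha, b, hb, rfl⟩
    exact (le_sup_left (a := m₁) _ ha).inter (le_sup_right (b := m₂) _ hb)

lemma MeasurableSpace.isPiSystem_image2_inter (m₁ m₂ : MeasurableSpace Ω) :
    IsPiSystem (Set.image2 (· ∩ ·) {s | MeasurableSet[m₁] s} {s | MeasurableSet[m₂] s}) := by
  rintro _ ⟨a, ha, b, hb, rfl⟩ _ ⟨c, hc, d, hd, rfl⟩ -
  exact ⟨a ∩ c, ha.inter hc, b ∩ d, hb.inter hd, Set.inter_inter_inter_comm a c b d⟩

lemma ProbabilityTheory.Indep.sup_left_of_indep_sup [IsZeroOrProbabilityMeasure μ]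
    {m₁ m₂ m₃ : MeasurableSpace Ω} (h₁ : m₁ ≤ m0) (h₂ : m₂ ≤ m0) (h₃ : m₃ ≤ m0)
    (h₁₃ : Indep m₁ m₃ μ) (h₂₁₃ : Indep m₂ (m₁ ⊔ m₃) μ) : Indep (m₁ ⊔ m₂) m₃ μ := by
  have h₁₂ : Indep m₁ m₂ μ := (indep_of_indep_of_le_right h₂₁₃ le_sup_left).symm
  refine IndepSets.indep (sup_le h₁ h₂) h₃ (MeasurableSpace.isPiSystem_image2_inter m₁ m₂)
    (@MeasurableSpace.isPiSystem_measurableSet Ω m₃)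
    (MeasurableSpace.sup_eq_generateFrom_image2_inter m₁ m₂)
    (@MeasurableSpace.generateFrom_measurableSet Ω m₃).symm ?_
  rw [IndepSets_iff]
  rintro _ c ⟨a, ha, b, hb, rfl⟩ hc
  calc μ (a ∩ b ∩ c) = μ (b ∩ (a ∩ c)) := by congr 1; ext; simp only [Set.mem_inter_iff]; tauto
    _ = μ b * (μ a * μ c) := by
      rw [(Indep_iff _ _ _).1 h₂₁₃ b _ hb ((le_sup_left (b := m₃) _ ha).inter
        (le_sup_right (a := m₁) _ hc)), (Indep_iff _ _ _).1 h₁₃ a c ha hc]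
    _ = μ (a ∩ b) * μ c := by rw [(Indep_iff _ _ _).1 h₁₂ a b ha hb]; ring

end IndepSup

section CondExp

variable {Ω F : Type*} [NormedAddCommGroup F] [NormedSpace ℝ F] [CompleteSpace F]
  {m0 : MeasurableSpace Ω} {μ : Measure Ω} [IsFiniteMeasure μ] {f : Ω → F}

lemma setIntegral_eq_measureReal_smul_integral_of_indep {m₁ m₂ : MeasurableSpace Ω}
    (h₁ : m₁ ≤ m0) (h₂ : m₂ ≤ m0) (hf : StronglyMeasurable[m₁] f) (hfi : Integrable f μ)
    (hind : Indep m₁ m₂ μ) {s : Set Ω} (hs : MeasurableSet[m₂] s) :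
    ∫ x in s, f x ∂μ = μ.real s • ∫ x, f x ∂μ :=
  calc ∫ x in s, f x ∂μ = ∫ x in s, μ[f | m₂] x ∂μ := (setIntegral_condExp h₂ hfi hs).symm
    _ = ∫ _ in s, μ[f] ∂μ := setIntegral_congr_ae (h₂ _ hs) <| by
      filter_upwards [condExp_indep_eq h₁ h₂ hf hind] with x hx _ using hx
    _ = μ.real s • ∫ x, f x ∂μ := setIntegral_const _

lemma condExp_sup_indep_eq {m₁ m₂ mA : MeasurableSpace Ω} (h₁A : m₁ ≤ mA) (hA : mA ≤ m0)
    (h₂ : m₂ ≤ m0) (hf : StronglyMeasurable[mA] f) (hfi : Integrable f μ)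
    (hind : Indep mA m₂ μ) :
    μ[f | m₁ ⊔ m₂] =ᵐ[μ] μ[f | m₁] := by
  have h₁ : m₁ ≤ m0 := h₁A.trans hA
  have hsup : m₁ ⊔ m₂ ≤ m0 := sup_le h₁ h₂
  have hsets : ∀ s, MeasurableSet[m₁ ⊔ m₂] s → ∫ x in s, μ[f | m₁] x ∂μ = ∫ x in s, f x ∂μ := by
    intro s hs
    induction s, hs using MeasurableSpace.induction_on_inter
        (MeasurableSpace.sup_eq_generateFrom_image2_inter m₁ m₂)
        (MeasurableSpace.isPiSystem_image2_inter m₁ m₂) with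
    | empty => simp
    | basic _ hab =>
      obtain ⟨a, ha, b, hb, rfl⟩ := hab
      have key : ∀ g : Ω → F, StronglyMeasurable[mA] g → Integrable g μ →
          ∫ x in a ∩ b, g x ∂μ = μ.real b • ∫ x in a, g x ∂μ := fun g hg hgi => by
        rw [Set.inter_comm, ← setIntegral_indicator (h₁ _ ha),
          setIntegral_eq_measureReal_smul_integral_of_indep hA h₂ (hg.indicator (h₁A _ ha))
            (hgi.indicator (h₁ _ ha)) hind hb, integral_indicator (h₁ _ ha)]
      rw [key _ (stronglyMeasurable_condExp.mono h₁A) integrable_condExp, key f hf hfi,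
        setIntegral_condExp h₁ hfi ha]
    | compl t htm ht =>
      rw [eq_sub_of_add_eq' (integral_add_compl (hsup _ htm) integrable_condExp),
        eq_sub_of_add_eq' (integral_add_compl (hsup _ htm) hfi), integral_condExp h₁, ht]
    | iUnion s hdisj hsm hs =>
      rw [integral_iUnion (fun i => hsup _ (hsm i)) hdisj integrable_condExp.integrableOn,
        integral_iUnion (fun i => hsup _ (hsm i)) hdisj hfi.integrableOn]
      exact tsum_congr hs
  exact (ae_eq_condExp_of_forall_setIntegral_eq hsup hfi
    (fun s _ _ => integrable_condExp.integrableOn) (fun s hs _ => hsets s hs)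
    ((stronglyMeasurable_condExp (m := m₁) (f := f) (μ := μ)).mono
      (le_sup_left (b := m₂))).aestronglyMeasurable).symm

end CondExp

section Tail

variable {Ω : Type*} {m0 : MeasurableSpace Ω} {μ : Measure Ω}

lemma exists_measurableSet_iInf_measure_symmDiff_eq_zero_of_tendsto
    {m : ℕ → MeasurableSpace Ω} (hm : Antitone m) {g : ℕ → Ω → ℝ}
    (hg : ∀ k, Measurable[m k] (g k)) {A : Set Ω}
    (hA : ∀ᵐ ω ∂μ, Tendsto (fun k => g k ω) atTop (𝓝 (A.indicator (1 : Ω → ℝ) ω))) :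
    ∃ B, MeasurableSet[⨅ k, m k] B ∧ μ (A ∆ B) = 0 := by
  refine ⟨{ω | Tendsto (fun k => g k ω) atTop (𝓝 1)}, ?_, ?_⟩
  · refine MeasurableSpace.measurableSet_iInf.2 fun n => ?_
    simp_rw [← tendsto_add_atTop_iff_nat (f := fun k => g k _) n]
    exact measurableSet_tendsto _ fun k => (hg (k + n)).mono (hm (Nat.le_add_left n k)) le_rfl
  · refine measure_mono_null (fun ω hω => ?_) (ae_iff.1 hA)
    intro hlim
    rcases Set.mem_symmDiff.1 hω with ⟨hωA, hωB⟩ | ⟨hωB, hωA⟩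
    · exact hωB (by simpa [hωA] using hlim)
    · exact one_ne_zero (tendsto_nhds_unique hωB (by simpa [hωA] using hlim))

theorem exists_measurableSet_iInf_measure_symmDiff_eq_zero_of_indep [IsProbabilityMeasure μ]
    {F 𝒢 W : ℤ → MeasurableSpace Ω} (hF : Monotone F) (hF𝒢 : ∀ n, F n ≤ 𝒢 n)
    (h𝒢 : ∀ n, 𝒢 n ≤ m0) (hW : ∀ n, W n ≤ m0) (hFW : Antitone fun n => F n ⊔ W n)
    (hind : ∀ n, Indep (𝒢 n) (W n) μ) (hgen : ⨅ n, 𝒢 n ≤ ⨆ n, F n ⊔ W n)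
    {A : Set Ω} (hA : MeasurableSet[⨅ n, 𝒢 n] A) :
    ∃ B, MeasurableSet[⨅ n, F n] B ∧ μ (A ∆ B) = 0 := by
  let ℱ : Filtration ℕ m0 :=
    { seq := fun k => F (-k) ⊔ W (-k)
      mono' := fun i j hij => hFW (by omega)
      le' := fun k => sup_le ((hF𝒢 _).trans (h𝒢 _)) (hW _) }
  have hFWℱ : ⨆ n, F n ⊔ W n ≤ ⨆ k, ℱ k :=
    iSup_le fun n => le_iSup_of_le (-n).toNat (hFW (show -((-n).toNat : ℤ) ≤ n by omega))
  have hAℱ : MeasurableSet[⨆ k, ℱ k] A := hFWℱ _ (hgen _ hA)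
  have hA𝒢 : ∀ n, MeasurableSet[𝒢 n] A := fun n => iInf_le 𝒢 n _ hA
  have hAi : Integrable (A.indicator (1 : Ω → ℝ)) μ :=
    (integrable_const 1).indicator (h𝒢 0 _ (hA𝒢 0))
  have hcond : ∀ k : ℕ,
      μ[A.indicator (1 : Ω → ℝ) | ℱ k] =ᵐ[μ] μ[A.indicator (1 : Ω → ℝ) | F (-k)] := fun k =>
    condExp_sup_indep_eq (hF𝒢 _) (h𝒢 _) (hW _) (stronglyMeasurable_one.indicator (hA𝒢 _)) hAi
      (hind _)
  obtain ⟨B, hB, hAB⟩ := exists_measurableSet_iInf_measure_symmDiff_eq_zero_of_tendsto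
    (m := fun k : ℕ => F (-k)) (fun i j hij => hF (by omega))
    (fun k => stronglyMeasurable_condExp.measurable) (by
      filter_upwards [hAi.tendsto_ae_condExp (stronglyMeasurable_one.indicator hAℱ),
        ae_all_iff.2 hcond] with ω hlim heq
      exact hlim.congr heq)
  have hFF : ⨅ k : ℕ, F (-k) ≤ ⨅ n, F n :=
    le_iInf fun n => iInf_le_of_le (-n).toNat (hF (show -((-n).toNat : ℤ) ≤ n by omega))
  exact ⟨B, hFF _ hB, hAB⟩

end Tail

section Chain

variable {Ω : Type*}

abbrev pastSigma (m : ℤ → MeasurableSpace Ω) (n : ℤ) : MeasurableSpace Ω :=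
  ⨆ k, ⨆ _ : k ≤ n, m k

abbrev futureSigma (m : ℤ → MeasurableSpace Ω) (n : ℤ) : MeasurableSpace Ω :=
  ⨆ k, ⨆ _ : n < k, m k

variable {m0 : MeasurableSpace Ω} {m : ℤ → MeasurableSpace Ω}

lemma le_pastSigma {k n : ℤ} (h : k ≤ n) : m k ≤ pastSigma m n := le_iSup₂_of_le k h le_rfl

lemma le_futureSigma {k n : ℤ} (h : n < k) : m k ≤ futureSigma m n := le_iSup₂_of_le k h le_rfl

lemma pastSigma_mono : Monotone (pastSigma m) :=
  fun _ _ h => iSup₂_mono' fun k hk => ⟨k, hk.trans h, le_rfl⟩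

lemma futureSigma_anti : Antitone (futureSigma m) :=
  fun _ _ h => iSup₂_mono' fun k hk => ⟨k, h.trans_lt hk, le_rfl⟩

lemma pastSigma_le (h : ∀ k, m k ≤ m0) (n : ℤ) : pastSigma m n ≤ m0 := iSup₂_le fun k _ => h k

lemma futureSigma_le (h : ∀ k, m k ≤ m0) (n : ℤ) : futureSigma m n ≤ m0 := iSup₂_le fun k _ => h k

lemma indep_futureSigma_pastSigma {μ : Measure Ω} [IsProbabilityMeasure μ]
    {a b : ℤ → MeasurableSpace Ω} (ha : ∀ k, a k ≤ m0) (hb : ∀ k, b k ≤ m0)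
    (hab : ∀ k, a k ≤ b k)
    (hind : ∀ n, Indep (a (n + 1)) (pastSigma b n) μ) (n : ℤ) :
    Indep (futureSigma a n) (pastSigma b n) μ := by
  let window : ℤ → MeasurableSpace Ω := fun j => ⨆ k ∈ Set.Ioc n j, a k
  have hwindow_mono : Monotone window :=
    fun i j hij => biSup_mono fun k hk => ⟨hk.1, hk.2.trans hij⟩
  have hwindow_le : ∀ j, window j ≤ m0 := fun j => iSup₂_le fun k _ => ha k
  have hwindow : ∀ j, n ≤ j → Indep (window j) (pastSigma b n) μ := by
    refine fun j hj => Int.leInduction ?_ (fun j hj ih => ?_) j hj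
    · simpa [window] using indep_bot_left (pastSigma b n)
    · have hsucc : window (j + 1) = window j ⊔ a (j + 1) := by
        simp only [window, ← Order.succ_eq_add_one, ← Set.insert_Ioc_right_eq_Ioc_succ hj,
          iSup_insert, sup_comm]
      rw [hsucc]
      refine ih.sup_left_of_indep_sup (hwindow_le j) (ha _) (pastSigma_le hb n)
        (indep_of_indep_of_le_right (hind j) (sup_le ?_ (pastSigma_mono hj)))
      exact iSup₂_le fun k hk => (hab k).trans (le_pastSigma hk.2)
  have hfuture : futureSigma a n = ⨆ j, window j :=
    le_antisymm (iSup₂_le fun k hk => le_iSup_of_le k (le_iSup₂_of_le k ⟨hk, le_rfl⟩ le_rfl))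
      (iSup_le fun j => iSup₂_le fun k hk => le_futureSigma hk.1)
  rw [hfuture]
  refine indep_iSup_of_monotone (fun j => ?_) hwindow_le (pastSigma_le hb n) hwindow_mono
  exact indep_of_indep_of_le_left (hwindow (max j n) (le_max_right j n))
    (hwindow_mono (le_max_left j n))

variable {E G : ℤ → Type*} {mE : ∀ n, MeasurableSpace (E n)} {mG : ∀ n, MeasurableSpace (G n)}
  {X : ∀ n, Ω → E n} {V : ∀ n, Ω → G n} {f : ∀ n, E n × G (n + 1) → E (n + 1)}

lemma comap_succ_le_of_recursion (hf : ∀ n, Measurable (f n))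
    (hrec : ∀ n ω, X (n + 1) ω = f n (X n ω, V (n + 1) ω)) (n : ℤ) :
    (mE (n + 1)).comap (X (n + 1)) ≤ (mE n).comap (X n) ⊔ (mG (n + 1)).comap (V (n + 1)) :=
  calc (mE (n + 1)).comap (X (n + 1))
      = ((mE (n + 1)).comap (f n)).comap (fun ω => (X n ω, V (n + 1) ω)) := by
        rw [MeasurableSpace.comap_comp]; congr; exact funext (hrec n)
    _ ≤ ((mE n).prod (mG (n + 1))).comap (fun ω => (X n ω, V (n + 1) ω)) :=
        MeasurableSpace.comap_mono (hf n).comap_le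
    _ = (mE n).comap (X n) ⊔ (mG (n + 1)).comap (V (n + 1)) :=
        MeasurableSpace.comap_prodMk _ _

lemma comap_le_pastSigma_sup_futureSigma (hf : ∀ n, Measurable (f n))
    (hrec : ∀ n ω, X (n + 1) ω = f n (X n ω, V (n + 1) ω)) (n k : ℤ) :
    (mE k).comap (X k) ≤ pastSigma (fun k => (mE k).comap (X k)) n ⊔
      futureSigma (fun k => (mG k).comap (V k)) n := by
  rcases le_or_gt k n with hkn | hnk
  · exact le_sup_of_le_left (le_pastSigma (m := fun k => (mE k).comap (X k)) hkn)
  refine Int.leInduction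
    (le_sup_of_le_left (le_pastSigma (m := fun k => (mE k).comap (X k)) le_rfl))
    (fun k hk ih => ?_) k hnk.le
  exact (comap_succ_le_of_recursion hf hrec k).trans
    (sup_le ih (le_sup_of_le_right
      (le_futureSigma (m := fun k => (mG k).comap (V k)) (by omega))))

lemma antitone_pastSigma_sup_futureSigma (hf : ∀ n, Measurable (f n))
    (hrec : ∀ n ω, X (n + 1) ω = f n (X n ω, V (n + 1) ω)) :
    Antitone fun n => pastSigma (fun k => (mE k).comap (X k)) n ⊔
      futureSigma (fun k => (mG k).comap (V k)) n :=
  fun _ _ h => sup_le (iSup₂_le fun k _ => comap_le_pastSigma_sup_futureSigma hf hrec _ k)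
    (le_sup_of_le_right (futureSigma_anti h))

lemma pastSigma_le_iSup_pastSigma_sup_futureSigma (hf : ∀ n, Measurable (f n))
    (hrec : ∀ n ω, X (n + 1) ω = f n (X n ω, V (n + 1) ω)) (n : ℤ) :
    pastSigma (fun k => (mE k).comap (X k) ⊔ (mG k).comap (V k)) n ≤
      ⨆ j, pastSigma (fun k => (mE k).comap (X k)) j ⊔
        futureSigma (fun k => (mG k).comap (V k)) j :=
  iSup₂_le fun k _ => le_iSup_of_le (k - 1) <|
    sup_le (comap_le_pastSigma_sup_futureSigma hf hrec _ k)
      (le_sup_of_le_right (le_futureSigma (m := fun k => (mG k).comap (V k)) (by omega)))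

end Chain

/-- for an (inhomogeneous) constructive Markov chain
`X_{n+1} = f_n (X_n, V_{n+1})` indexed by `ℤ`, with each `V_{n+1}` independent of
`((X_k, V_k))_{k ≤ n}`, the asymptotic σ-fields coincide up to null sets:
`⋂ n 𝓕_n^{(X,V)} = ⋂ n 𝓕_n^X` (the inclusion `⊇` being trivial, every event of
`⋂ n 𝓕_n^{(X,V)}` coincides a.s. with an event of `⋂ n 𝓕_n^X`). -/
theorem stmt_0 {Ω : Type*} [MeasurableSpace Ω] (P : Measure Ω) [IsProbabilityMeasure P]
    (E : ℤ → Type*) (mE : ∀ n, MeasurableSpace (E n))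
    (G : ℤ → Type*) (mG : ∀ n, MeasurableSpace (G n))
    (X : ∀ n : ℤ, Ω → E n) (V : ∀ n : ℤ, Ω → G n)
    (hX : ∀ n, Measurable (X n)) (hV : ∀ n, Measurable (V n))
    (f : ∀ n : ℤ, E n × G (n + 1) → E (n + 1)) (hf : ∀ n, Measurable (f n))
    (hrec : ∀ n : ℤ, ∀ ω, X (n + 1) ω = f n (X n ω, V (n + 1) ω))
    (hindep : ∀ n : ℤ,
      Indep (MeasurableSpace.comap (V (n + 1)) (mG (n + 1)))
        (⨆ k : ℤ, ⨆ _ : k ≤ n,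
          MeasurableSpace.comap (X k) (mE k) ⊔ MeasurableSpace.comap (V k) (mG k)) P) :
    (⨅ n : ℤ, ⨆ k : ℤ, ⨆ _ : k ≤ n, MeasurableSpace.comap (X k) (mE k)) ≤
      (⨅ n : ℤ, ⨆ k : ℤ, ⨆ _ : k ≤ n,
        MeasurableSpace.comap (X k) (mE k) ⊔ MeasurableSpace.comap (V k) (mG k)) ∧
    ∀ A : Set Ω,
      MeasurableSet[⨅ n : ℤ, ⨆ k : ℤ, ⨆ _ : k ≤ n,
        MeasurableSpace.comap (X k) (mE k) ⊔ MeasurableSpace.comap (V k) (mG k)] A →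
      ∃ B : Set Ω,
        MeasurableSet[⨅ n : ℤ, ⨆ k : ℤ, ⨆ _ : k ≤ n,
          MeasurableSpace.comap (X k) (mE k)] B ∧ P (A ∆ B) = 0 := by
  have hX_le_XV : ∀ n, pastSigma (fun k => (mE k).comap (X k)) n ≤
      pastSigma (fun k => (mE k).comap (X k) ⊔ (mG k).comap (V k)) n :=
    fun n => iSup₂_mono fun k _ => le_sup_left
  have hXV_le : ∀ k, (mE k).comap (X k) ⊔ (mG k).comap (V k) ≤ ‹MeasurableSpace Ω› :=
    fun k => sup_le (hX k).comap_le (hV k).comap_le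
  refine ⟨iInf_mono hX_le_XV, fun A hA => ?_⟩
  exact exists_measurableSet_iInf_measure_symmDiff_eq_zero_of_indep pastSigma_mono hX_le_XV
    (pastSigma_le hXV_le) (futureSigma_le fun k => (hV k).comap_le)
    (antitone_pastSigma_sup_futureSigma hf hrec)
    (fun n => (indep_futureSigma_pastSigma (fun k => (hV k).comap_le) hXV_le
      (fun k => le_sup_right) hindep n).symm)
    ((iInf_le _ 0).trans (pastSigma_le_iSup_pastSigma_sup_futureSigma hf hrec 0)) hA
end

section
/- If $(X_n)_{n\in\mathbf{Z}}$ is a stationary, irreducible, aperiodic Markov chain on a countable state space, then its asymptotic (tail at $-\infty$) sigma-field $\bigcap_{n\in\mathbf{Z}}\sigma(X_k : k\le n)$ is trivial, i.e., every event in it has probability 0 or 1. -/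
open MeasureTheory ProbabilityTheory Filter
open scoped ENNReal Topology

/-- Iterates `δ_x Kⁿ` of a transition kernel `K` on a countable state space. -/
noncomputable def kernelIter {E : Type*} [MeasurableSpace E]
    (K : E → Measure E) (x : E) : ℕ → Measure E
  | 0 => Measure.dirac x
  | n + 1 => (kernelIter K x n).bind K

/-!
An event `A` of the asymptotic σ-field lies in the past `σ(X_k : k ≤ m)` of every time `m`.
By the Markov property, for a cylinder event `C` on the times `n, …, n + r - 1` there is
`0 ≤ h ≤ 1` with `P(A ∩ C) = ∫_A h(X_n) dP`, and going `N` steps further back,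
`P(A ∩ C) = ∫_A (Kᴺh)(X_{n-N}) dP`. Now `|Kᴺh(x) - π(h)|` is at most the `ℓ¹` distance between
`Kᴺ(x, ·)` and `π`, whose `π`-integral tends to `0` by dominated convergence; by stationarity
`X_{n-N}` has law `π` and `π(h) = P(C)`, so `P(A ∩ C) = P(A) P(C)`. The cylinders form a
π-system generating the past at time `0`, hence `A` is independent of itself.
-/

section MeasureLemmas

variable {E : Type*} [MeasurableSpace E]

lemma lintegral_le_one {μ : Measure E} [IsProbabilityMeasure μ] {g : E → ℝ≥0∞}
    (hg : ∀ y, g y ≤ 1) : ∫⁻ y, g y ∂μ ≤ 1 :=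
  (lintegral_mono hg).trans_eq (by simp)

/-- On a countable space, `l1Dist μ ν` is twice the total variation distance of `μ` and `ν`. -/
noncomputable def l1Dist (μ ν : Measure E) : ℝ≥0∞ :=
  ∑' y, ENNReal.ofReal |(μ {y}).toReal - (ν {y}).toReal|

lemma l1Dist_comm (μ ν : Measure E) : l1Dist μ ν = l1Dist ν μ := by
  simp only [l1Dist, abs_sub_comm]

lemma measure_le_add_ofReal_abs_sub (μ ν : Measure E) [IsFiniteMeasure μ] (s : Set E) :
    μ s ≤ ν s + ENNReal.ofReal |(μ s).toReal - (ν s).toReal| :=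
  calc μ s = ENNReal.ofReal (μ s).toReal := (ENNReal.ofReal_toReal (measure_ne_top μ _)).symm
    _ ≤ ENNReal.ofReal ((ν s).toReal + |(μ s).toReal - (ν s).toReal|) :=
      ENNReal.ofReal_le_ofReal (by linarith [le_abs_self ((μ s).toReal - (ν s).toReal)])
    _ ≤ ν s + ENNReal.ofReal |(μ s).toReal - (ν s).toReal| := by
      rw [ENNReal.ofReal_add ENNReal.toReal_nonneg (abs_nonneg _)]
      exact add_le_add_left ENNReal.ofReal_toReal_le _

lemma ofReal_abs_sub_le_add (μ ν : Measure E) [IsFiniteMeasure μ] [IsFiniteMeasure ν]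
    (s : Set E) : ENNReal.ofReal |(μ s).toReal - (ν s).toReal| ≤ μ s + ν s := by
  rw [← ENNReal.ofReal_toReal (measure_ne_top μ s), ← ENNReal.ofReal_toReal (measure_ne_top ν s),
    ← ENNReal.ofReal_add ENNReal.toReal_nonneg ENNReal.toReal_nonneg]
  exact ENNReal.ofReal_le_ofReal ((abs_sub _ _).trans (by simp [abs_of_nonneg]))

variable [MeasurableSingletonClass E] [Countable E]

lemma isProbabilityMeasure_kernelIter {K : E → Measure E}
    (hK : ∀ x, IsProbabilityMeasure (K x)) (x : E) (n : ℕ) :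
    IsProbabilityMeasure (kernelIter K x n) := by
  induction n with
  | zero => exact Measure.dirac.isProbabilityMeasure
  | succ n _ =>
    constructor
    simp [kernelIter,
      Measure.bind_apply MeasurableSet.univ (measurable_of_countable K).aemeasurable]

lemma lintegral_kernelIter_succ (K : E → Measure E) (x : E) (n : ℕ) (g : E → ℝ≥0∞) :
    ∫⁻ y, g y ∂kernelIter K x (n + 1) = ∫⁻ z, ∫⁻ y, g y ∂K z ∂kernelIter K x n :=
  Measure.lintegral_bind (measurable_of_countable K).aemeasurable
    (measurable_of_countable g).aemeasurable

lemma tsum_measure_singleton (μ : Measure E) : ∑' y, μ {y} = μ Set.univ := by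
  simpa using Measure.tsum_indicator_apply_singleton μ Set.univ MeasurableSet.univ

lemma lintegral_le_lintegral_add_l1Dist (μ ν : Measure E) [IsFiniteMeasure μ]
    {g : E → ℝ≥0∞} (hg : ∀ y, g y ≤ 1) :
    ∫⁻ y, g y ∂μ ≤ ∫⁻ y, g y ∂ν + l1Dist μ ν := by
  simp only [lintegral_countable', l1Dist, ← ENNReal.tsum_add]
  refine ENNReal.tsum_le_tsum fun y => ?_
  calc g y * μ {y} ≤ g y * (ν {y} + ENNReal.ofReal |(μ {y}).toReal - (ν {y}).toReal|) :=
        mul_le_mul_right (measure_le_add_ofReal_abs_sub μ ν {y}) _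
    _ ≤ g y * ν {y} + ENNReal.ofReal |(μ {y}).toReal - (ν {y}).toReal| := by
        rw [mul_add]
        exact add_le_add_right (mul_le_of_le_one_left' (hg y)) _

lemma l1Dist_le_two (μ ν : Measure E) [IsProbabilityMeasure μ] [IsProbabilityMeasure ν] :
    l1Dist μ ν ≤ 2 :=
  calc l1Dist μ ν ≤ ∑' y, (μ {y} + ν {y}) :=
        ENNReal.tsum_le_tsum fun y => ofReal_abs_sub_le_add μ ν {y}
    _ = 2 := by rw [ENNReal.tsum_add, tsum_measure_singleton, tsum_measure_singleton]; norm_num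

lemma l1Dist_eq_ofReal (μ ν : Measure E) [IsFiniteMeasure μ] [IsFiniteMeasure ν] :
    l1Dist μ ν = ENNReal.ofReal (∑' y, |(μ {y}).toReal - (ν {y}).toReal|) := by
  have hsum (ρ : Measure E) [IsFiniteMeasure ρ] : Summable fun y => (ρ {y}).toReal :=
    ENNReal.summable_toReal (by rw [tsum_measure_singleton]; exact measure_ne_top ρ _)
  refine (ENNReal.ofReal_tsum_of_nonneg (fun _ => abs_nonneg _) ?_).symm
  refine ((hsum μ).add (hsum ν)).of_nonneg_of_le (fun _ => abs_nonneg _) fun y => ?_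
  exact (abs_sub _ _).trans (by simp [abs_of_nonneg])

end MeasureLemmas

section MarkovChain

variable {E Ω : Type*}

def blockCylinder (X : ℤ → Ω → E) (n : ℤ) (r : ℕ) (S : ℕ → Set E) : Set Ω :=
  {ω | ∀ j < r, X (n + j) ω ∈ S j}

lemma blockCylinder_zero (X : ℤ → Ω → E) (n : ℤ) (S : ℕ → Set E) :
    blockCylinder X n 0 S = Set.univ := by
  simp [blockCylinder]

lemma blockCylinder_succ (X : ℤ → Ω → E) (n : ℤ) (r : ℕ) (S : ℕ → Set E) :
    blockCylinder X n (r + 1) S =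
      X n ⁻¹' S 0 ∩ blockCylinder X (n + 1) r fun j => S (j + 1) := by
  ext ω
  simp only [blockCylinder, Set.mem_ofPred_eq, Set.mem_inter_iff, Set.mem_preimage]
  constructor
  · intro hω
    refine ⟨by simpa using hω 0 r.succ_pos, fun j hj => ?_⟩
    simpa [add_assoc, add_comm (1 : ℤ)] using hω (j + 1) (by omega)
  · rintro ⟨h0, hω⟩ (_ | j) hj
    · simpa using h0
    · simpa [add_assoc, add_comm (1 : ℤ)] using hω j (by omega)

variable [MeasurableSpace E]

abbrev past (X : ℤ → Ω → E) (n : ℤ) : MeasurableSpace Ω :=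
  ⨆ k : ℤ, ⨆ _ : k ≤ n, MeasurableSpace.comap (X k) inferInstance

lemma past_le [MeasurableSpace Ω] {X : ℤ → Ω → E} (hX : ∀ n, Measurable (X n)) (n : ℤ) :
    past X n ≤ ‹_› :=
  iSup₂_le fun k _ => (hX k).comap_le

lemma past_mono (X : ℤ → Ω → E) {m n : ℤ} (h : m ≤ n) : past X m ≤ past X n :=
  iSup₂_le fun k hk => le_iSup₂_of_le (f := fun k (_ : k ≤ n) => _) k (hk.trans h) le_rfl

lemma measurableSet_past_preimage (X : ℤ → Ω → E) {k n : ℤ} (h : k ≤ n) {s : Set E}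
    (hs : MeasurableSet s) : MeasurableSet[past X n] (X k ⁻¹' s) :=
  le_iSup₂_of_le (f := fun k (_ : k ≤ n) => MeasurableSpace.comap (X k) inferInstance) k h
    le_rfl _ ⟨s, hs, rfl⟩

def HasTransitionKernel [MeasurableSpace Ω] (P : Measure Ω) (X : ℤ → Ω → E)
    (K : E → Measure E) : Prop :=
  ∀ n : ℤ, ∀ y : E,
    P[(Set.indicator {ω | X (n + 1) ω = y} fun _ => (1 : ℝ)) | past X n]
      =ᵐ[P] fun ω => (K (X n ω) {y}).toReal

variable [MeasurableSingletonClass E] [Countable E] [MeasurableSpace Ω]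
  {P : Measure Ω} [IsProbabilityMeasure P] {X : ℤ → Ω → E} {K : E → Measure E}

lemma measure_inter_preimage_succ_singleton (hX : ∀ n, Measurable (X n))
    (hK : ∀ x, IsProbabilityMeasure (K x)) (hMarkov : HasTransitionKernel P X K)
    {n : ℤ} (y : E) {B : Set Ω} (hB : MeasurableSet[past X n] B) :
    P (B ∩ X (n + 1) ⁻¹' {y}) = ∫⁻ ω in B, K (X n ω) {y} ∂P := by
  have hle := past_le hX n
  have hY : MeasurableSet {ω | X (n + 1) ω = y} := hX _ (measurableSet_singleton y)
  have hK_meas : Measurable fun ω => K (X n ω) {y} :=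
    (measurable_of_countable fun x => K x {y}).comp (hX n)
  have hreal := setIntegral_condExp hle ((integrable_const (μ := P) (1 : ℝ)).indicator hY) hB
  rw [setIntegral_congr_ae (hle _ hB) ((hMarkov n y).mono fun ω hω _ => hω),
    integral_indicator hY, setIntegral_const, measureReal_restrict_apply hY, smul_eq_mul, mul_one,
    integral_toReal hK_meas.aemeasurable.restrict
      (ae_of_all _ fun ω => measure_lt_top (K (X n ω)) {y})] at hreal
  rw [← ENNReal.toReal_eq_toReal_iff' (measure_ne_top _ _)
    ((setLIntegral_le_lintegral _ _).trans_lt ?_).ne]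
  · rw [hreal, Set.inter_comm]
    rfl
  · exact (lintegral_mono fun ω => prob_le_one).trans_lt (by simp)

lemma setLIntegral_comp_succ (hX : ∀ n, Measurable (X n))
    (hK : ∀ x, IsProbabilityMeasure (K x)) (hMarkov : HasTransitionKernel P X K)
    {n : ℤ} (g : E → ℝ≥0∞) {B : Set Ω} (hB : MeasurableSet[past X n] B) :
    ∫⁻ ω in B, g (X (n + 1) ω) ∂P = ∫⁻ ω in B, ∫⁻ y, g y ∂K (X n ω) ∂P := by
  have hK_meas (y : E) : Measurable fun ω => K (X n ω) {y} :=
    (measurable_of_countable fun x => K x {y}).comp (hX n)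
  calc ∫⁻ ω in B, g (X (n + 1) ω) ∂P
      = ∑' y, g y * P (B ∩ X (n + 1) ⁻¹' {y}) := by
        rw [← lintegral_map (measurable_of_countable g) (hX _), lintegral_countable']
        simp only [Measure.map_apply (hX _) (measurableSet_singleton _),
          Measure.restrict_apply (hX _ (measurableSet_singleton _)), Set.inter_comm]
    _ = ∑' y, ∫⁻ ω in B, g y * K (X n ω) {y} ∂P := by
        congr with y
        rw [measure_inter_preimage_succ_singleton hX hK hMarkov y hB,
          lintegral_const_mul _ (hK_meas y)]
    _ = ∫⁻ ω in B, ∫⁻ y, g y ∂K (X n ω) ∂P := by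
        simp only [lintegral_countable']
        exact (lintegral_tsum fun y => ((hK_meas y).const_mul (g y)).aemeasurable).symm

lemma setLIntegral_comp_add (hX : ∀ n, Measurable (X n))
    (hK : ∀ x, IsProbabilityMeasure (K x)) (hMarkov : HasTransitionKernel P X K)
    (N : ℕ) {n : ℤ} (g : E → ℝ≥0∞) {B : Set Ω} (hB : MeasurableSet[past X n] B) :
    ∫⁻ ω in B, g (X (n + N) ω) ∂P = ∫⁻ ω in B, ∫⁻ y, g y ∂kernelIter K (X n ω) N ∂P := by
  induction N generalizing g with
  | zero => simp [kernelIter]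
  | succ N ih =>
    calc ∫⁻ ω in B, g (X (n + (N + 1 : ℕ)) ω) ∂P = ∫⁻ ω in B, g (X (n + N + 1) ω) ∂P := by
          push_cast; rw [add_assoc]
      _ = ∫⁻ ω in B, ∫⁻ y, g y ∂K (X (n + N) ω) ∂P :=
          setLIntegral_comp_succ hX hK hMarkov g (past_mono X (by omega) B hB)
      _ = ∫⁻ ω in B, ∫⁻ y, g y ∂kernelIter K (X n ω) (N + 1) ∂P := by
          simp only [lintegral_kernelIter_succ]
          exact ih fun z => ∫⁻ y, g y ∂K z

lemma exists_measure_inter_blockCylinder_eq (hX : ∀ n, Measurable (X n))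
    (hK : ∀ x, IsProbabilityMeasure (K x)) (hMarkov : HasTransitionKernel P X K)
    (r : ℕ) (n : ℤ) (S : ℕ → Set E) :
    ∃ h : E → ℝ≥0∞, (∀ x, h x ≤ 1) ∧ ∀ B, MeasurableSet[past X n] B →
      P (B ∩ blockCylinder X n r S) = ∫⁻ ω in B, h (X n ω) ∂P := by
  induction r generalizing n S with
  | zero => exact ⟨1, fun _ => le_rfl, fun B _ => by simp [blockCylinder_zero]⟩
  | succ r ih =>
    obtain ⟨h, h_le, hcyl⟩ := ih (n + 1) fun j => S (j + 1)
    refine ⟨(S 0).indicator fun x => ∫⁻ y, h y ∂K x,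
      Set.indicator_le fun x _ => lintegral_le_one h_le, fun B hB => ?_⟩
    have hS0 : MeasurableSet (X n ⁻¹' S 0) := hX n (S 0).to_countable.measurableSet
    have hB' : MeasurableSet[past X n] (B ∩ X n ⁻¹' S 0) :=
      hB.inter (measurableSet_past_preimage X le_rfl (S 0).to_countable.measurableSet)
    calc P (B ∩ blockCylinder X n (r + 1) S)
        = P ((B ∩ X n ⁻¹' S 0) ∩ blockCylinder X (n + 1) r fun j => S (j + 1)) := by
          rw [blockCylinder_succ, Set.inter_assoc]
      _ = ∫⁻ ω in B ∩ X n ⁻¹' S 0, h (X (n + 1) ω) ∂P :=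
          hcyl _ (past_mono X (by omega) _ hB')
      _ = ∫⁻ ω in B ∩ X n ⁻¹' S 0, ∫⁻ y, h y ∂K (X n ω) ∂P :=
          setLIntegral_comp_succ hX hK hMarkov h hB'
      _ = ∫⁻ ω in B, (S 0).indicator (fun x => ∫⁻ y, h y ∂K x) (X n ω) ∂P := by
          rw [Set.inter_comm, ← Measure.restrict_restrict hS0, ← lintegral_indicator hS0]
          congr with ω

end MarkovChain

lemma exists_blockCylinder_eq_of_mem_piiUnionInter {E Ω : Type*} [MeasurableSpace E]
    {X : ℤ → Ω → E} {I : Set ℤ} {t : Set Ω}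
    (ht : t ∈ piiUnionInter (fun k => {s | MeasurableSet[.comap (X k) inferInstance] s}) I) :
    ∃ n r S, t = blockCylinder X n r S := by
  obtain ⟨p, -, f, hf, rfl⟩ := ht
  choose T hT using hf
  -- every index of `p` lies in the window `[-N, N]`
  set N : ℕ := p.sup Int.natAbs
  refine ⟨-N, 2 * N + 1, fun j => if h : -(N : ℤ) + j ∈ p then T _ h else Set.univ, ?_⟩
  ext ω
  simp only [Set.mem_iInter, blockCylinder, Set.mem_ofPred_eq]
  constructor
  · intro hω j _
    split_ifs with h
    · rw [← Set.mem_preimage, (hT _ h).2]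
      exact hω _ h
    · trivial
  · intro hω k hk
    have hkN : k.natAbs ≤ N := Finset.le_sup (f := Int.natAbs) hk
    obtain ⟨j, rfl⟩ : ∃ j : ℕ, k = -N + j := ⟨(k + N).toNat, by omega⟩
    have hj := hω j (by omega)
    rw [dif_pos hk, ← Set.mem_preimage, (hT _ hk).2] at hj
    exact hj

section TailTriviality

variable {E : Type*} [MeasurableSpace E] {Ω : Type*} [MeasurableSpace Ω] {P : Measure Ω}

lemma setLIntegral_comp_le_add {Y : Ω → E} (hY : Measurable Y) {π : Measure E}
    (hπ : P.map Y = π) {F G d : E → ℝ≥0∞} (hd : Measurable d) (hFG : ∀ x, F x ≤ G x + d x)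
    (A : Set Ω) : ∫⁻ ω in A, F (Y ω) ∂P ≤ ∫⁻ ω in A, G (Y ω) ∂P + ∫⁻ x, d x ∂π :=
  calc ∫⁻ ω in A, F (Y ω) ∂P ≤ ∫⁻ ω in A, (G (Y ω) + d (Y ω)) ∂P :=
        lintegral_mono fun ω => hFG _
    _ = ∫⁻ ω in A, G (Y ω) ∂P + ∫⁻ ω in A, d (Y ω) ∂P := lintegral_add_right _ (hd.comp hY)
    _ ≤ ∫⁻ ω in A, G (Y ω) ∂P + ∫⁻ ω, d (Y ω) ∂P :=
        add_le_add_right (setLIntegral_le_lintegral _ _) _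
    _ = ∫⁻ ω in A, G (Y ω) ∂P + ∫⁻ x, d x ∂π := by rw [← hπ, lintegral_map hd hY]

variable [MeasurableSingletonClass E] [Countable E] [IsProbabilityMeasure P]
  {X : ℤ → Ω → E} {K : E → Measure E} {π : Measure E} [IsProbabilityMeasure π]

lemma tendsto_lintegral_l1Dist_kernelIter (hK : ∀ x, IsProbabilityMeasure (K x))
    (hTV : ∀ x : E,
      Tendsto (fun n : ℕ => ∑' y : E, |(kernelIter K x n {y}).toReal - (π {y}).toReal|)
        atTop (𝓝 0)) :
    Tendsto (fun N => ∫⁻ x, l1Dist (kernelIter K x N) π ∂π) atTop (𝓝 0) := by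
  have hlim (x : E) : Tendsto (fun N => l1Dist (kernelIter K x N) π) atTop (𝓝 0) := by
    have hreal (N : ℕ) : l1Dist (kernelIter K x N) π
        = ENNReal.ofReal (∑' y, |(kernelIter K x N {y}).toReal - (π {y}).toReal|) := by
      have := isProbabilityMeasure_kernelIter hK x N
      exact l1Dist_eq_ofReal _ _
    simpa [hreal] using ENNReal.tendsto_ofReal (hTV x)
  simpa using tendsto_lintegral_of_dominated_convergence (fun _ => 2)
    (fun N => measurable_of_countable _)
    (fun N => ae_of_all _ fun x => by
      have := isProbabilityMeasure_kernelIter hK x N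
      exact l1Dist_le_two _ _)
    (by simp) (ae_of_all _ hlim)

lemma measure_inter_blockCylinder_eq_mul (hX : ∀ n, Measurable (X n))
    (hK : ∀ x, IsProbabilityMeasure (K x)) (hstat : ∀ n : ℤ, P.map (X n) = π)
    (hMarkov : HasTransitionKernel P X K)
    (hε : Tendsto (fun N => ∫⁻ x, l1Dist (kernelIter K x N) π ∂π) atTop (𝓝 0))
    {A : Set Ω} (hA : ∀ n, MeasurableSet[past X n] A) (n : ℤ) (r : ℕ) (S : ℕ → Set E) :
    P (A ∩ blockCylinder X n r S) = P A * P (blockCylinder X n r S) := by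
  obtain ⟨h, h_le, hcyl⟩ := exists_measure_inter_blockCylinder_eq hX hK hMarkov r n S
  set C := blockCylinder X n r S
  have hC : P C = ∫⁻ x, h x ∂π := by
    rw [← Set.univ_inter C, hcyl _ MeasurableSet.univ, Measure.restrict_univ, ← hstat n,
      lintegral_map (measurable_of_countable h) (hX n)]
  -- `A` lies in the past of every time `n - N`, from where the chain needs `N` steps to reach `C`
  have hAC (N : ℕ) :
      P (A ∩ C) = ∫⁻ ω in A, ∫⁻ y, h y ∂kernelIter K (X (n - N) ω) N ∂P := by
    rw [hcyl A (hA n), ← setLIntegral_comp_add hX hK hMarkov N h (hA (n - N)), sub_add_cancel]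
  have hPAC : P A * P C = ∫⁻ _ in A, P C ∂P := by rw [setLIntegral_const, mul_comm]
  have hup (N : ℕ) : P (A ∩ C) ≤ P A * P C + ∫⁻ x, l1Dist (kernelIter K x N) π ∂π := by
    rw [hAC N, hPAC]
    refine setLIntegral_comp_le_add (F := fun x => ∫⁻ y, h y ∂kernelIter K x N)
      (G := fun _ => P C) (hX _) (hstat _) (measurable_of_countable _) (fun x => ?_) A
    have := isProbabilityMeasure_kernelIter hK x N
    exact hC ▸ lintegral_le_lintegral_add_l1Dist _ _ h_le
  have hdown (N : ℕ) : P A * P C ≤ P (A ∩ C) + ∫⁻ x, l1Dist (kernelIter K x N) π ∂π := by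
    rw [hAC N, hPAC]
    refine setLIntegral_comp_le_add (F := fun _ => P C)
      (G := fun x => ∫⁻ y, h y ∂kernelIter K x N) (hX _) (hstat _) (measurable_of_countable _)
      (fun x => ?_) A
    rw [hC, l1Dist_comm]
    exact lintegral_le_lintegral_add_l1Dist _ _ h_le
  have hlim (a : ℝ≥0∞) :
      Tendsto (fun N => a + ∫⁻ x, l1Dist (kernelIter K x N) π ∂π) atTop (𝓝 a) := by
    simpa using tendsto_const_nhds.add hε
  exact le_antisymm (ge_of_tendsto' (hlim _) hup) (ge_of_tendsto' (hlim _) hdown)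

lemma indep_generateFrom_singleton_past (hX : ∀ n, Measurable (X n))
    (hK : ∀ x, IsProbabilityMeasure (K x)) (hstat : ∀ n : ℤ, P.map (X n) = π)
    (hMarkov : HasTransitionKernel P X K)
    (hε : Tendsto (fun N => ∫⁻ x, l1Dist (kernelIter K x N) π ∂π) atTop (𝓝 0))
    {A : Set Ω} (hA : ∀ n, MeasurableSet[past X n] A) (n : ℤ) :
    Indep (.generateFrom {A}) (past X n) P := by
  refine IndepSets.indep (MeasurableSpace.generateFrom_singleton_le (past_le hX n _ (hA n)))
    (past_le hX n) (.singleton A)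
    (isPiSystem_piiUnionInter _
      (fun k => @MeasurableSpace.isPiSystem_measurableSet Ω (.comap (X k) inferInstance)) _)
    rfl (generateFrom_piiUnionInter_measurableSet _ {k | k ≤ n}).symm ?_
  rw [IndepSets_iff]
  rintro _ t rfl ht
  obtain ⟨m, r, S, rfl⟩ := exists_blockCylinder_eq_of_mem_piiUnionInter ht
  exact measure_inter_blockCylinder_eq_mul hX hK hstat hMarkov hε hA m r S

end TailTriviality

theorem stmt_1_general {E : Type*} [MeasurableSpace E] [MeasurableSingletonClass E] [Countable E]
    {Ω : Type*} [MeasurableSpace Ω] (P : Measure Ω) [IsProbabilityMeasure P]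
    (X : ℤ → Ω → E) (hX : ∀ n, Measurable (X n))
    (K : E → Measure E) (hK : ∀ x, IsProbabilityMeasure (K x))
    (π : Measure E) [IsProbabilityMeasure π]
    (hstat : ∀ n : ℤ, Measure.map (X n) P = π)
    (hMarkov : ∀ n : ℤ, ∀ y : E,
      P[(Set.indicator {ω | X (n + 1) ω = y} fun _ => (1 : ℝ)) |
          ⨆ k : ℤ, ⨆ _ : k ≤ n, MeasurableSpace.comap (X k) inferInstance]
        =ᵐ[P] fun ω => (K (X n ω) {y}).toReal)
    (hTV : ∀ x : E,
      Tendsto (fun n : ℕ => ∑' y : E, |(kernelIter K x n {y}).toReal - (π {y}).toReal|)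
        atTop (𝓝 0)) :
    ∀ A : Set Ω,
      MeasurableSet[⨅ n : ℤ, ⨆ k : ℤ, ⨆ _ : k ≤ n,
        MeasurableSpace.comap (X k) inferInstance] A →
      P A = 0 ∨ P A = 1 := by
  intro A hA
  have hA_past (n : ℤ) : MeasurableSet[past X n] A := iInf_le (fun n => past X n) n A hA
  have hindep := indep_generateFrom_singleton_past hX hK hstat hMarkov
    (tendsto_lintegral_l1Dist_kernelIter hK hTV) hA_past 0
  exact measure_eq_zero_or_one_of_indepSet_self
    (indep_of_indep_of_le_right hindep (MeasurableSpace.generateFrom_singleton_le (hA_past 0)))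

/-- a stationary irreducible aperiodic Markov chain `(X_n)_{n ∈ ℤ}` on a
countable state space has a trivial asymptotic σ-field `⋂_n σ(X_k : k ≤ n)`:
every event in it has probability `0` or `1`. (Irreducibility, aperiodicity and
positive recurrence are used through the total variation convergence
`Kⁿ(x,·) → π` for every `x`.) -/
theorem stmt_1 {E : Type*} [MeasurableSpace E] [MeasurableSingletonClass E] [Countable E]
    {Ω : Type*} [MeasurableSpace Ω] (P : Measure Ω) [IsProbabilityMeasure P]
    (X : ℤ → Ω → E) (hX : ∀ n, Measurable (X n))
    (K : E → Measure E) (hK : ∀ x, IsProbabilityMeasure (K x))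
    (π : Measure E) [IsProbabilityMeasure π]
    (hπinv : π.bind K = π)
    (hstat : ∀ n : ℤ, Measure.map (X n) P = π)
    (hMarkov : ∀ n : ℤ, ∀ y : E,
      P[(Set.indicator {ω | X (n + 1) ω = y} fun _ => (1 : ℝ)) |
          ⨆ k : ℤ, ⨆ _ : k ≤ n, MeasurableSpace.comap (X k) inferInstance]
        =ᵐ[P] fun ω => (K (X n ω) {y}).toReal)
    (hTV : ∀ x : E,
      Tendsto (fun n : ℕ => ∑' y : E, |(kernelIter K x n {y}).toReal - (π {y}).toReal|)
        atTop (𝓝 0)) :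
    ∀ A : Set Ω,
      MeasurableSet[⨅ n : ℤ, ⨆ k : ℤ, ⨆ _ : k ≤ n,
        MeasurableSpace.comap (X k) inferInstance] A →
      P A = 0 ∨ P A = 1 :=
  stmt_1_general P X hX K hK π hstat hMarkov hTV
end

section
/- Let $\nu$ be a probability measure on a measurable space and $a\ge 0$. If $\int \mathbf{1}_{[\nu\{x\}=a]}\,\nu(dx)=1$, then either $a=0$ and $\nu$ is diffuse (atomless), or $a>0$, $1/a$ is a positive integer, and $\nu$ is the uniform distribution on a set of exactly $1/a$ points. -/
/-!
The hypothesis says that `S = {y | ν {y} = a}` has (outer) measure `1`. A point outside a set of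
full measure is a null atom, which settles `a = 0`. For `a > 0`, a finite measure has only finitely
many atoms of mass at least `a`, so `S` is a finite set of atoms of mass `a` and
`1 = ν S = card S * a`.
-/

open MeasureTheory
open scoped ENNReal

namespace MeasureTheory

variable {α : Type*} [MeasurableSpace α] [MeasurableSingletonClass α] {μ : Measure α}

theorem Measure.finite_setOf_le_measure_singleton [IsFiniteMeasure μ] {ε : ℝ≥0∞} (hε : 0 < ε) :
    {x | ε ≤ μ {x}}.Finite :=
  Measure.finite_const_le_meas_of_disjoint_iUnion μ hε measurableSet_singleton
    (fun _ _ h => Set.disjoint_singleton.2 h) (by simp [Set.iUnion_of_singleton])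

theorem measure_singleton_eq_zero_of_measure_eq_one [IsProbabilityMeasure μ] {s : Set α}
    {x : α} (hs : μ s = 1) (hx : x ∉ s) : μ {x} = 0 := by
  have hunion : μ s + μ {x} ≤ 1 := by
    rw [← measure_union (Set.disjoint_singleton_right.2 hx) (measurableSet_singleton x)]
    exact prob_le_one
  rw [hs] at hunion
  exact nonpos_iff_eq_zero.1 <|
    (ENNReal.add_le_add_iff_left ENNReal.one_ne_top).1 (by simpa using hunion)

theorem measure_coe_finset_of_forall_measure_singleton_eq {F : Finset α} {a : ℝ≥0∞}
    (hF : ∀ x ∈ F, μ {x} = a) : μ F = F.card * a := by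
  rw [← sum_measure_singleton, Finset.sum_congr rfl hF, Finset.sum_const, nsmul_eq_mul]

end MeasureTheory

/-- let `ν` be a probability measure and `a ≥ 0`. If
`∫ 𝟙_{[ν{x} = a]} dν = 1`, then either `a = 0` and `ν` is diffuse (atomless), or
`a > 0`, `1/a` is a positive integer, and `ν` is the uniform distribution on a set of
exactly `1/a` points. -/
theorem stmt_2 {E : Type*} [MeasurableSpace E] [MeasurableSingletonClass E]
    (ν : Measure E) [IsProbabilityMeasure ν] (a : ℝ≥0∞)
    (h : ∫⁻ x, Set.indicator {y : E | ν {y} = a} 1 x ∂ν = 1) :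
    (a = 0 ∧ ∀ x : E, ν {x} = 0) ∨
      (0 < a ∧ ∃ F : Finset E, (F.card : ℝ≥0∞) = a⁻¹ ∧ ν ↑F = 1 ∧
        ∀ x ∈ F, ν {x} = a) := by
  set S := {y : E | ν {y} = a}
  have hS : ν S = 1 := le_antisymm prob_le_one (h ▸ lintegral_indicator_one_le S)
  rcases eq_or_ne a 0 with rfl | ha
  · refine Or.inl ⟨rfl, fun x => ?_⟩
    by_cases hx : x ∈ S
    exacts [hx, measure_singleton_eq_zero_of_measure_eq_one hS hx]
  · have hpos : 0 < a := pos_iff_ne_zero.2 ha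
    obtain ⟨F, hF⟩ := ((Measure.finite_setOf_le_measure_singleton (μ := ν) hpos).subset
      fun y (hy : ν {y} = a) => hy.ge).exists_finset_coe
    have hmem : ∀ x ∈ F, ν {x} = a := fun x hx => hF.subset hx
    have hνF : ν F = 1 := hF ▸ hS
    refine Or.inr ⟨hpos, F, ENNReal.eq_inv_of_mul_eq_one_left ?_, hνF, hmem⟩
    rw [← measure_coe_finset_of_forall_measure_singleton_eq hmem, hνF]
end

section
/- Let $X$ be a random variable whose conditional law given a sub-sigma-field $\mathcal{F}$ is almost surely the uniform distribution on a set of $N$ points (for a fixed integer $N\ge 1$), with a regular version $(\nu_\omega)$. Then there exists an $\sigma(X)\vee\mathcal{F}$-measurable random variable $U$ with values in $\{1,\dots,N\}$ such that $U$ is independent of $\mathcal{F}$ and uniformly distributed on $\{1,\dots,N\}$. -/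
/-!
Fix a Borel embedding `f : E → ℝ`. If `ν ω` is uniform on an `N`-point set `F`, then
`N * ν ω {y | f y < f x}` is the rank of `x` in `F` for the order pulled back by `f`, so
`U ω := 1 + (rank of X ω in F)` is a measurable function of `(ω, X ω)`. Since `(ω, X ω)` has law
`P|𝓕 ⊗ ν` on `𝓕 ⊗ 𝓔`, conditionally on `𝓕` the point `X` is uniform on `F` and its rank is
uniform on `{0, …, N - 1}`: `P (U = k, A) = P A / N` for every `A ∈ 𝓕`. This gives both the law
of `U` and its independence from `𝓕`.
-/

open MeasureTheory ProbabilityTheory Finset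
open scoped ENNReal

section Rank

variable {α β : Type*} [LinearOrder β] {f : α → β} (F : Finset α)

lemma card_filter_lt_lt_card {x : α} (hx : x ∈ F) : #{y ∈ F | f y < f x} < #F :=
  card_lt_card (filter_ssubset.2 ⟨x, hx, lt_irrefl _⟩)

lemma card_filter_lt_lt_card_filter_lt {x y : α} (hx : x ∈ F) (hxy : f x < f y) :
    #{z ∈ F | f z < f x} < #{z ∈ F | f z < f y} :=
  card_lt_card ⟨fun _ hz => mem_filter.2 ⟨(mem_filter.1 hz).1, (mem_filter.1 hz).2.trans hxy⟩,
    fun hsub => lt_irrefl _ (mem_filter.1 (hsub (mem_filter.2 ⟨hx, hxy⟩))).2⟩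

lemma injOn_card_filter_lt (hf : Function.Injective f) :
    Set.InjOn (fun x => #{y ∈ F | f y < f x}) F := by
  intro x hx y hy hxy
  rcases lt_trichotomy (f x) (f y) with h | h | h
  · exact absurd hxy (card_filter_lt_lt_card_filter_lt F hx h).ne
  · exact hf h
  · exact absurd hxy (card_filter_lt_lt_card_filter_lt F hy h).ne'

lemma image_card_filter_lt (hf : Function.Injective f) :
    F.image (fun x => #{y ∈ F | f y < f x}) = range #F := by
  refine eq_of_subset_of_card_le ?_ ?_
  · intro k hk
    obtain ⟨x, hx, rfl⟩ := mem_image.1 hk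
    exact mem_range.2 (card_filter_lt_lt_card F hx)
  · rw [card_image_of_injOn (injOn_card_filter_lt F hf), card_range]

lemma card_filter_card_filter_lt_eq (hf : Function.Injective f) {k : ℕ} (hk : k < #F) :
    #{x ∈ F | #{y ∈ F | f y < f x} = k} = 1 := by
  obtain ⟨x, hx, hxk⟩ := mem_image.1 ((image_card_filter_lt F hf).symm ▸ mem_range.2 hk)
  refine card_eq_one.2 ⟨x, eq_singleton_iff_unique_mem.2 ⟨mem_filter.2 ⟨hx, hxk⟩, ?_⟩⟩
  intro y hy
  obtain ⟨hyF, hyk⟩ := mem_filter.1 hy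
  exact injOn_card_filter_lt F hf hyF hx (hyk.trans hxk.symm)

end Rank

section Uniform

variable {E : Type*} [MeasurableSpace E]

lemma measure_eq_card_filter_mul [MeasurableSingletonClass E] {μ : Measure E} {F : Finset E}
    {c : ℝ≥0∞} (hF : μ (↑F)ᶜ = 0) (hc : ∀ x ∈ F, μ {x} = c) (s : Set E)
    [DecidablePred (· ∈ s)] : μ s = #{x ∈ F | x ∈ s} * c := by
  have hsF : s ∩ F = ↑({x ∈ F | x ∈ s}) := by
    ext x
    simp [and_comm]
  rw [← measure_inter_conull hF, hsF, ← sum_measure_singleton,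
    sum_congr rfl fun x hx => hc x (mem_filter.1 hx).1, sum_const, nsmul_eq_mul]

/-- When `μ` is uniform on `N` points, this is `1 +` the rank of `x` among them for the order
pulled back by `f`; the `min` keeps it in `{1, …, N}` everywhere else. -/
noncomputable def rankIndex (μ : Measure E) (f : E → ℝ) (N : ℕ) (x : E) : ℕ :=
  min N (1 + ⌊(μ {y | f y < f x}).toReal * N⌋₊)

lemma rankIndex_mem_Icc (μ : Measure E) (f : E → ℝ) {N : ℕ} (hN : 1 ≤ N) (x : E) :
    rankIndex μ f N x ∈ Icc 1 N := by
  simp only [rankIndex, mem_Icc]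
  omega

lemma rankIndex_eq_of_mem [MeasurableSingletonClass E] {μ : Measure E} {f : E → ℝ}
    {F : Finset E} {N : ℕ} (hN : N ≠ 0) (hFcard : #F = N) (hF : μ (↑F)ᶜ = 0)
    (hc : ∀ x ∈ F, μ {x} = (N : ℝ≥0∞)⁻¹) {x : E} (hx : x ∈ F) :
    rankIndex μ f N x = 1 + #{y ∈ F | f y < f x} := by
  classical
  have hrank : (μ {y | f y < f x}).toReal * N = #{y ∈ F | f y < f x} := by
    rw [measure_eq_card_filter_mul hF hc, ENNReal.toReal_mul, ENNReal.toReal_inv]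
    simp only [ENNReal.toReal_natCast, Set.mem_ofPred_eq]
    field_simp
  have hlt := card_filter_lt_lt_card (f := f) F hx
  rw [rankIndex, hrank, Nat.floor_natCast]
  omega

lemma measure_rankIndex_eq [MeasurableSingletonClass E] {μ : Measure E} {f : E → ℝ}
    (hf : Function.Injective f) {F : Finset E} {N : ℕ} (hFcard : #F = N) (hF : μ (↑F)ᶜ = 0)
    (hc : ∀ x ∈ F, μ {x} = (N : ℝ≥0∞)⁻¹) {k : ℕ} (hk : k ∈ Icc 1 N) :
    μ {x | rankIndex μ f N x = k} = (N : ℝ≥0∞)⁻¹ := by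
  classical
  obtain ⟨hk1, hkN⟩ := mem_Icc.1 hk
  have hfiber : {x ∈ F | x ∈ {x | rankIndex μ f N x = k}} =
      {x ∈ F | #{y ∈ F | f y < f x} = k - 1} := by
    refine filter_congr fun x hx => ?_
    rw [Set.mem_ofPred_eq, rankIndex_eq_of_mem (by omega) hFcard hF hc hx]
    omega
  rw [measure_eq_card_filter_mul hF hc, hfiber,
    card_filter_card_filter_lt_eq F hf (by omega), Nat.cast_one, one_mul]

end Uniform

section Disintegration

variable {Ω E : Type*} {m0 m : MeasurableSpace Ω} [MeasurableSpace E]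

lemma measurable_rankIndex_kernel {κ : Kernel[m] Ω E} [IsSFiniteKernel κ] {f : E → ℝ}
    (hf : Measurable f) (N : ℕ) :
    Measurable[m.prod ‹_›] fun p : Ω × E => rankIndex (κ p.1) f N p.2 := by
  have hlt : MeasurableSet {q : (Ω × E) × E | f q.2 < f q.1.2} :=
    measurableSet_lt (hf.comp measurable_snd) (hf.comp (measurable_snd.comp measurable_fst))
  have hlower : Measurable fun p : Ω × E => κ p.1 {y | f y < f p.2} :=
    (κ.prodMkRight E).measurable_kernel_prodMk_left hlt
  exact (measurable_from_top (f := fun n : ℕ => min N (1 + n))).comp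
    (hlower.ennreal_toReal.mul_const _).nat_floor

theorem measure_graph_preimage_eq_lintegral (hm : m ≤ m0) (P : Measure[m0] Ω)
    [IsFiniteMeasure P] {X : Ω → E} (hX : Measurable[m0] X) (κ : Kernel[m] Ω E)
    [IsFiniteKernel κ]
    (hκ : ∀ s, MeasurableSet s → ∀ A, MeasurableSet[m] A → ∫⁻ ω in A, κ ω s ∂P = P (A ∩ X ⁻¹' s))
    {T : Set (Ω × E)} (hT : MeasurableSet[m.prod ‹_›] T) :
    P ((fun ω => (ω, X ω)) ⁻¹' T) = ∫⁻ ω, κ ω (Prod.mk ω ⁻¹' T) ∂P := by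
  have hgraph : Measurable[m0] fun ω => (ω, X ω) :=
    (measurable_id.mono hm le_rfl).prodMk hX
  have hlaw : @Measure.map _ _ m0 _ (fun ω => (ω, X ω)) P = P.trim hm ⊗ₘ κ := by
    refine ext_of_generate_finite _ generateFrom_prod.symm isPiSystem_prod ?_ ?_
    · rintro _ ⟨A, hA, s, hs, rfl⟩
      rw [Measure.map_apply hgraph (hA.prod hs), Set.mk_preimage_prod,
        Measure.compProd_apply_prod hA hs, restrict_trim hm P hA,
        lintegral_trim hm (κ.measurable_coe hs), hκ s hs A hA]
      rfl
    · rw [Measure.map_apply hgraph MeasurableSet.univ, Measure.compProd_apply MeasurableSet.univ,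
        lintegral_trim hm (κ.measurable_kernel_prodMk_left MeasurableSet.univ)]
      simpa using (hκ Set.univ MeasurableSet.univ Set.univ MeasurableSet.univ).symm
  rw [← Measure.map_apply hgraph hT, hlaw, Measure.compProd_apply hT,
    lintegral_trim hm (κ.measurable_kernel_prodMk_left hT)]

theorem setLIntegral_kernel_eq_measure_inter_graph_preimage (hm : m ≤ m0)
    (P : Measure[m0] Ω) [IsFiniteMeasure P] {X : Ω → E} (hX : Measurable[m0] X)
    (κ : Kernel[m] Ω E) [IsFiniteKernel κ]
    (hκ : ∀ s, MeasurableSet s → ∀ A, MeasurableSet[m] A → ∫⁻ ω in A, κ ω s ∂P = P (A ∩ X ⁻¹' s))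
    {A : Set Ω} (hA : MeasurableSet[m] A) {T : Set (Ω × E)} (hT : MeasurableSet[m.prod ‹_›] T) :
    ∫⁻ ω in A, κ ω (Prod.mk ω ⁻¹' T) ∂P = P (A ∩ (fun ω => (ω, X ω)) ⁻¹' T) := by
  have hκA : ∀ s, MeasurableSet s → ∀ B, MeasurableSet[m] B →
      ∫⁻ ω in B, κ ω s ∂(P.restrict A) = P.restrict A (B ∩ X ⁻¹' s) := by
    intro s hs B hB
    rw [Measure.restrict_restrict (hm B hB), hκ s hs _ (hB.inter hA),
      Measure.restrict_apply ((hm B hB).inter (hX hs)), Set.inter_right_comm]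
  rw [← measure_graph_preimage_eq_lintegral hm (P.restrict A) hX κ hκA hT,
    Measure.restrict_apply' (hm A hA), Set.inter_comm]

theorem measure_rankIndex_preimage_inter (hm : m ≤ m0) (P : Measure[m0] Ω) [IsFiniteMeasure P]
    {X : Ω → E} (hX : Measurable[m0] X) (κ : Kernel[m] Ω E) [IsMarkovKernel κ]
    (hκ : ∀ s, MeasurableSet s → ∀ A, MeasurableSet[m] A → ∫⁻ ω in A, κ ω s ∂P = P (A ∩ X ⁻¹' s))
    [MeasurableSingletonClass E] {f : E → ℝ} (hf_meas : Measurable f)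
    (hf_inj : Function.Injective f) {N : ℕ}
    (hunif : ∀ᵐ ω ∂P, ∃ F : Finset E, #F = N ∧ κ ω F = 1 ∧
      ∀ x ∈ F, κ ω {x} = (N : ℝ≥0∞)⁻¹)
    {k : ℕ} (hk : k ∈ Icc 1 N) {A : Set Ω} (hA : MeasurableSet[m] A) :
    P ({ω | rankIndex (κ ω) f N (X ω) = k} ∩ A) = (N : ℝ≥0∞)⁻¹ * P A := by
  have hκk : ∀ᵐ ω ∂P, κ ω {x | rankIndex (κ ω) f N x = k} = (N : ℝ≥0∞)⁻¹ := by
    filter_upwards [hunif] with ω ⟨F, hFcard, hF1, hc⟩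
    exact measure_rankIndex_eq hf_inj hFcard ((prob_compl_eq_zero_iff F.measurableSet).2 hF1) hc hk
  calc P ({ω | rankIndex (κ ω) f N (X ω) = k} ∩ A)
      = P (A ∩ (fun ω => (ω, X ω)) ⁻¹' {p | rankIndex (κ p.1) f N p.2 = k}) :=
        congrArg P (Set.inter_comm _ _)
    _ = ∫⁻ ω in A, κ ω {x | rankIndex (κ ω) f N x = k} ∂P :=
        (setLIntegral_kernel_eq_measure_inter_graph_preimage hm P hX κ hκ hA
          (measurable_rankIndex_kernel hf_meas N (measurableSet_singleton k))).symm
    _ = ∫⁻ _ in A, (N : ℝ≥0∞)⁻¹ ∂P := lintegral_congr_ae (ae_restrict_of_ae hκk)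
    _ = (N : ℝ≥0∞)⁻¹ * P A := setLIntegral_const _ _

end Disintegration

lemma indep_comap_of_measure_preimage_singleton_inter {Ω β : Type*} {m0 m : MeasurableSpace Ω}
    [MeasurableSpace β] [MeasurableSingletonClass β] [Countable β] {P : Measure[m0] Ω}
    {U : Ω → β} (hU : Measurable[m0] U)
    (h : ∀ b A, MeasurableSet[m] A → P (U ⁻¹' {b} ∩ A) = P (U ⁻¹' {b}) * P A) :
    Indep (MeasurableSpace.comap U ‹_›) m P := by
  refine (@Indep_iff Ω _ _ m0 P).2 ?_
  rintro _ A ⟨B, hB, rfl⟩ hA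
  have hfib : ∀ b ∈ B, MeasurableSet[m0] (U ⁻¹' {b}) := fun b _ => hU (measurableSet_singleton b)
  calc P (U ⁻¹' B ∩ A) = P.restrict A (U ⁻¹' B) := (Measure.restrict_apply (hU hB)).symm
    _ = ∑' b : B, P.restrict A (U ⁻¹' {↑b}) :=
      (tsum_measure_preimage_singleton B.to_countable hfib).symm
    _ = ∑' b : B, P (U ⁻¹' {↑b}) * P A := by
      congr with b
      rw [Measure.restrict_apply (hU (measurableSet_singleton _)), h b A hA]
    _ = P (U ⁻¹' B) * P A := by
      rw [ENNReal.tsum_mul_right, tsum_measure_preimage_singleton B.to_countable hfib]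

/-- let `X` be a random variable in a standard Borel space whose conditional
law given a sub-σ-field `𝓕 = m` is a.s. the uniform distribution on a set of `N` points
(`N ≥ 1` fixed), with regular version `(ν_ω)`. Then there exists a
`σ(X) ⊔ 𝓕`-measurable random variable `U` with values in `{1, …, N}`, independent of
`𝓕` and uniformly distributed on `{1, …, N}`. -/
theorem stmt_3 {Ω : Type*} {m0 : MeasurableSpace Ω} (P : Measure Ω)
    [IsProbabilityMeasure P]
    {E : Type*} [MeasurableSpace E] [StandardBorelSpace E]
    (X : Ω → E) (hXmeas : Measurable X)
    (m : MeasurableSpace Ω) (hm : m ≤ m0)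
    (ν : Ω → Measure E) (hν_prob : ∀ ω, IsProbabilityMeasure (ν ω))
    (hν_meas : ∀ s : Set E, MeasurableSet s → Measurable[m] fun ω => ν ω s)
    (hν : ∀ s : Set E, MeasurableSet s → ∀ A : Set Ω, MeasurableSet[m] A →
      ∫⁻ ω in A, ν ω s ∂P = P (A ∩ X ⁻¹' s))
    (N : ℕ) (hN : 1 ≤ N)
    (hunif : ∀ᵐ ω ∂P, ∃ F : Finset E, F.card = N ∧ ν ω ↑F = 1 ∧
      ∀ x ∈ F, ν ω {x} = (N : ℝ≥0∞)⁻¹) :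
    ∃ U : Ω → ℕ,
      Measurable[MeasurableSpace.comap X inferInstance ⊔ m] U ∧
      (∀ ω, U ω ∈ Finset.Icc 1 N) ∧
      Indep (MeasurableSpace.comap U inferInstance) m P ∧
      ∀ k ∈ Finset.Icc 1 N, P {ω | U ω = k} = (N : ℝ≥0∞)⁻¹ := by
  obtain ⟨f, hf⟩ := exists_measurableEmbedding_real E
  let κ : Kernel[m] Ω E := ⟨ν, Measure.measurable_of_measurable_coe ν hν_meas⟩
  have : IsMarkovKernel κ := ⟨hν_prob⟩
  let U : Ω → ℕ := fun ω => rankIndex (κ ω) f N (X ω)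
  have hgraph : Measurable[MeasurableSpace.comap X inferInstance ⊔ m, m.prod inferInstance]
      fun ω => (ω, X ω) :=
    (measurable_id.mono le_sup_right le_rfl).prodMk (measurable_iff_comap_le.2 le_sup_left)
  have hU : Measurable[MeasurableSpace.comap X inferInstance ⊔ m] U :=
    ((measurable_rankIndex_kernel (κ := κ) hf.measurable N).comp hgraph :)
  have hfiber : ∀ k ∈ Icc 1 N, ∀ A, MeasurableSet[m] A →
      P (U ⁻¹' {k} ∩ A) = (N : ℝ≥0∞)⁻¹ * P A := fun k hk A hA =>
    measure_rankIndex_preimage_inter hm P hXmeas κ hν hf.measurable hf.injective hunif hk hA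
  have hlaw : ∀ k ∈ Icc 1 N, P (U ⁻¹' {k}) = (N : ℝ≥0∞)⁻¹ := fun k hk => by
    rw [← Set.inter_univ (U ⁻¹' {k}), hfiber k hk Set.univ MeasurableSet.univ, measure_univ,
      mul_one]
  refine ⟨U, hU, fun ω => rankIndex_mem_Icc _ f hN _, ?_, hlaw⟩
  refine indep_comap_of_measure_preimage_singleton_inter
    (hU.mono (sup_le hXmeas.comap_le hm) le_rfl) fun k A hA => ?_
  by_cases hk : k ∈ Icc 1 N
  · rw [hfiber k hk A hA, hlaw k hk]
  · have hempty : U ⁻¹' {k} = ∅ :=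
      Set.preimage_singleton_eq_empty.2 fun ⟨ω, hω⟩ => hk (hω ▸ rankIndex_mem_Icc _ f hN _)
    rw [hempty, Set.empty_inter, measure_empty, zero_mul]
end

section
/- Let $E$ be a countable set with transition kernel $\Pi$ defined by $\Pi(x,\cdot)=\mathrm{law}(f(x,V_1))$, where the $V_n$ are i.i.d. of law $\beta$. If there exist $l\in\mathbf{N}^*$ and $c\in E$ such that $P[f_{V_l}\circ\cdots\circ f_{V_1}\equiv c]>0$ (the random composition is the constant map $c$ with positive probability), then for every Markov chain $(X_n)_{n\in\mathbf{Z}}$ governed by $X_{n+1}=f(X_n,V_{n+1})$ with $V_{n+1}$ independent of $((X_k,V_k))_{k\le n}$, one has $\mathcal{F}_n^X\subset\mathcal{F}_n^V$ for every $n\in\mathbf{Z}$ (i.e., each $X_n$ is a.s. a measurable function of $(V_k)_{k\le n}$). -/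
/-!
Coupling from the past. Cut the past of time `n` into consecutive blocks of length `l`. The
events "the block `(n - l(k+1), n - lk]` of innovations composes to the constant map `c`" are
independent and all have the same positive probability, so almost surely one of them occurs.
On that event `X (n - lk) = c` whatever happened before, and `X n` is obtained by feeding the
innovations `V j`, `n - lk < j ≤ n`, into `f` starting from `c`: a measurable function of the
past of `V`.
-/

open MeasureTheory ProbabilityTheory Filter Topology
open scoped ENNReal

open Classical in
theorem Measurable.dite_find {α β : Type*} [MeasurableSpace α] [MeasurableSpace β]
    {p : ℕ → α → Prop} (hp : ∀ k, MeasurableSet {x | p k x})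
    {F : ℕ → α → β} (hF : ∀ k, Measurable (F k)) {g : α → β} (hg : Measurable g) :
    Measurable fun x => if h : ∃ k, p k x then F (Nat.find h) x else g x :=
  Measurable.dite (s := {x | ∃ k, p k x})
    (Measurable.find (p := fun k (x : {x | ∃ k, p k x}) => p k x)
      (fun k => (hF k).comp measurable_subtype_coe) (fun k => measurable_subtype_coe (hp k))
      fun x => x.2)
    (hg.comp measurable_subtype_coe) (by simpa only [Set.ofPred_exists] using .iUnion hp)

theorem ProbabilityTheory.measure_iInter_compl_eq_zero_of_indep {Ω : Type*} [MeasurableSpace Ω]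
    {μ : Measure Ω} [IsProbabilityMeasure μ] {A : ℕ → Set Ω} (hA : ∀ k, MeasurableSet (A k))
    {p : ℝ≥0∞} (hp : p ≠ 0) (hpA : ∀ k, p ≤ μ (A k))
    (hind : ∀ K, μ ((⋂ k < K, (A k)ᶜ) ∩ (A K)ᶜ) = μ (⋂ k < K, (A k)ᶜ) * μ (A K)ᶜ) :
    μ (⋂ k, (A k)ᶜ) = 0 := by
  have hbound : ∀ K, μ (⋂ k < K, (A k)ᶜ) ≤ (1 - p) ^ K := by
    intro K
    induction K with
    | zero => simp
    | succ K ih =>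
      rw [Set.biInter_lt_succ, hind, pow_succ, prob_compl_eq_one_sub (hA K)]
      exact mul_le_mul' ih (tsub_le_tsub_left (hpA K) 1)
  have hlim : Tendsto (fun K => (1 - p) ^ K) atTop (𝓝 0) :=
    ENNReal.tendsto_pow_atTop_nhds_zero_of_lt_one
      (ENNReal.sub_lt_self ENNReal.one_ne_top one_ne_zero hp)
  refine le_antisymm (ge_of_tendsto' hlim fun K => (measure_mono ?_).trans (hbound K)) bot_le
  exact Set.subset_iInter₂ fun k _ => Set.iInter_subset _ k

section Words

variable {E G : Type*}

def collapsingWords (f : E → G → E) (l : ℕ) (c : E) : Set (Fin l → G) :=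
  {u | ∀ x, (List.ofFn u).foldl f x = c}

def window {α : Type*} (v : ℤ → α) (m : ℤ) (j : ℕ) : Fin j → α :=
  fun i => v (m + i + 1)

def pastWindow {α : Type*} {n : ℤ} (w : {k : ℤ // k ≤ n} → α) (m : ℤ) (j : ℕ)
    (h : m + j ≤ n) : Fin j → α :=
  fun i => w ⟨m + i + 1, by omega⟩

theorem foldl_window_of_recurrence (f : E → G → E) {x : ℤ → E} {v : ℤ → G}
    (hrec : ∀ k, x (k + 1) = f (x k) (v (k + 1))) (m : ℤ) (j : ℕ) :
    x (m + j) = (List.ofFn (window v m j)).foldl f (x m) := by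
  induction j with
  | zero => simp
  | succ j ih =>
    rw [List.ofFn_succ', List.concat_eq_append, List.foldl_append]
    change _ = List.foldl f (List.foldl f (x m) (List.ofFn (window v m j))) _
    rw [← ih, Nat.cast_succ, ← add_assoc, hrec]
    rfl

theorem eq_foldl_window_of_mem_collapsingWords (f : E → G → E) {x : ℤ → E} {v : ℤ → G}
    (hrec : ∀ k, x (k + 1) = f (x k) (v (k + 1))) {l : ℕ} {c : E} {m : ℤ}
    (hc : window v (m - l) l ∈ collapsingWords f l c) (j : ℕ) :
    x (m + j) = (List.ofFn (window v m j)).foldl f c := by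
  have hblock := foldl_window_of_recurrence f hrec (m - l) l
  rw [sub_add_cancel, hc] at hblock
  rw [foldl_window_of_recurrence f hrec m j, hblock]

-- The value `c` off the null event where no block collapses is arbitrary.
open Classical in
noncomputable def pastReadout (f : E → G → E) (c : E) (l : ℕ) (n : ℤ)
    (w : {k : ℤ // k ≤ n} → G) : E :=
  if h : ∃ k : ℕ, pastWindow w (n - (l * k : ℕ) - l) l (by omega) ∈ collapsingWords f l c then
    (List.ofFn (pastWindow w (n - (l * Nat.find h : ℕ)) (l * Nat.find h) (by omega))).foldl f c
  else c

open Classical in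
theorem pastReadout_eq_of_exists_mem_collapsingWords (f : E → G → E) {x : ℤ → E} {v : ℤ → G}
    (hrec : ∀ k, x (k + 1) = f (x k) (v (k + 1))) {l : ℕ} {c : E} {n : ℤ}
    (h : ∃ k : ℕ, window v (n - (l * k : ℕ) - l) l ∈ collapsingWords f l c) :
    pastReadout f c l n (fun k => v k) = x n := by
  rw [pastReadout, dif_pos]
  have := eq_foldl_window_of_mem_collapsingWords f hrec (Nat.find_spec h) (l * Nat.find h)
  rw [sub_add_cancel] at this
  exact this.symm

variable [MeasurableSpace E] [MeasurableSingletonClass E] [Countable E] [MeasurableSpace G]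

theorem measurable_foldl_ofFn {f : E → G → E} (hf : ∀ x, Measurable (f x)) (m : ℕ) :
    Measurable fun p : E × (Fin m → G) => (List.ofFn p.2).foldl f p.1 := by
  induction m with
  | zero => simpa using measurable_fst
  | succ m ih =>
    have hf' : Measurable (Function.uncurry f) := measurable_from_prod_countable_right hf
    simp only [List.ofFn_succ, List.foldl_cons]
    exact ih.comp
      ((hf'.comp (measurable_fst.prodMk ((measurable_pi_apply 0).comp measurable_snd))).prodMk
        (measurable_pi_lambda _ fun i => (measurable_pi_apply i.succ).comp measurable_snd))

theorem measurableSet_collapsingWords {f : E → G → E} (hf : ∀ x, Measurable (f x)) (l : ℕ)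
    (c : E) : MeasurableSet (collapsingWords f l c) := by
  have : collapsingWords f l c =
      ⋂ x, (fun u : Fin l → G => (List.ofFn u).foldl f x) ⁻¹' {c} := by
    ext u; simp [collapsingWords]
  rw [this]
  exact .iInter fun x =>
    (measurable_foldl_ofFn hf l).comp (measurable_const.prodMk measurable_id) (.singleton c)

theorem measurable_pastWindow {n : ℤ} (m : ℤ) (j : ℕ) (h : m + j ≤ n) :
    Measurable fun w : {k : ℤ // k ≤ n} → G => pastWindow w m j h :=
  measurable_pi_lambda _ fun _ => measurable_pi_apply _

theorem measurable_pastReadout {f : E → G → E} (hf : ∀ x, Measurable (f x)) (c : E) (l : ℕ)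
    (n : ℤ) : Measurable (pastReadout f c l n) :=
  Measurable.dite_find
    (p := fun k w => pastWindow w (n - (l * k : ℕ) - l) l (by omega) ∈ collapsingWords f l c)
    (F := fun K w => (List.ofFn (pastWindow w (n - (l * K : ℕ)) (l * K) (by omega))).foldl f c)
    (fun k => measurable_pastWindow _ _ (by omega) (measurableSet_collapsingWords hf l c))
    (fun k => (measurable_foldl_ofFn hf _).comp
      (measurable_const.prodMk (measurable_pastWindow _ _ (by omega))))
    measurable_const

end Words

section Windows

variable {Ω G : Type*} [MeasurableSpace G] {V : ℤ → Ω → G}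

theorem measurable_window_iSup {T : Set ℤ} {m : ℤ} {j : ℕ} (hT : ∀ i : Fin j, m + i + 1 ∈ T) :
    Measurable[⨆ k ∈ T, MeasurableSpace.comap (V k) inferInstance]
      fun ω => window (V · ω) m j :=
  @measurable_pi_lambda _ _ _ (⨆ k ∈ T, MeasurableSpace.comap (V k) inferInstance) _ _
    fun i => Measurable.of_comap_le
      (le_iSup₂ (f := fun k _ => MeasurableSpace.comap (V k) inferInstance) _ (hT i))

variable [MeasurableSpace Ω]

theorem measurable_window (hV : ∀ k, Measurable (V k)) (m : ℤ) (j : ℕ) :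
    Measurable fun ω => window (V · ω) m j :=
  measurable_pi_lambda _ fun _ => hV _

theorem map_window_eq_pi {P : Measure Ω} {β : Measure G} [SigmaFinite β]
    (hV : ∀ k, Measurable (V k)) (hiid : iIndepFun V P) (hlaw : ∀ k, P.map (V k) = β)
    (m : ℤ) (j : ℕ) :
    P.map (fun ω => window (V · ω) m j) = Measure.pi fun _ => β := by
  have hinj : Function.Injective fun i : Fin j => m + i + 1 := fun a b hab => by
    simpa [Fin.ext_iff] using hab
  have := (hiid.precomp hinj).map_fun_eq_pi_map fun i => (hV _).aemeasurable
  simp only [hlaw] at this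
  exact this

theorem ae_exists_window_mem {P : Measure Ω} {β : Measure G} [SigmaFinite β]
    (hV : ∀ k, Measurable (V k)) (hiid : iIndepFun V P) (hlaw : ∀ k, P.map (V k) = β)
    {l : ℕ} {S : Set (Fin l → G)} (hS : MeasurableSet S) (hpos : Measure.pi (fun _ => β) S ≠ 0)
    (n : ℤ) : ∀ᵐ ω ∂P, ∃ k : ℕ, window (V · ω) (n - (l * k : ℕ) - l) l ∈ S := by
  have := hiid.isProbabilityMeasure
  set A : ℕ → Set Ω := fun k => (fun ω => window (V · ω) (n - (l * k : ℕ) - l) l) ⁻¹' S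
  have hA : ∀ k, MeasurableSet (A k) := fun k => measurable_window hV _ _ hS
  have hPA : ∀ k, P (A k) = Measure.pi (fun _ => β) S := fun k => by
    rw [← map_window_eq_pi hV hiid hlaw, Measure.map_apply (measurable_window hV _ _) hS]
  have hind (K : ℕ) : P ((⋂ k < K, (A k)ᶜ) ∩ (A K)ᶜ) = P (⋂ k < K, (A k)ᶜ) * P (A K)ᶜ := by
    refine (Indep_iff _ _ P).1 (indep_iSup_of_disjoint (S := Set.Ioi (n - (l * K : ℕ)))
      (T := Set.Iic (n - (l * K : ℕ))) (fun k => (hV k).comap_le)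
      ((iIndepFun_iff_iIndep _ _ _).1 hiid) (Set.Iic_disjoint_Ioi le_rfl).symm) _ _ ?_ ?_
    · refine .biInter (Set.to_countable _) fun k hk => (measurable_window_iSup ?_ hS).compl
      intro i
      have : l * k + l ≤ l * K := by
        simpa [mul_add] using Nat.mul_le_mul_left l (Nat.succ_le_of_lt hk)
      show n - ((l * K : ℕ) : ℤ) < _
      omega
    · refine (measurable_window_iSup ?_ hS).compl
      intro i
      show _ ≤ n - ((l * K : ℕ) : ℤ)
      omega
  rw [ae_iff]
  convert measure_iInter_compl_eq_zero_of_indep hA hpos (fun k => (hPA k).ge) hind using 2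
  ext ω
  simp [A]

end Windows

theorem stmt_5_general {E G : Type*} [MeasurableSpace E] [MeasurableSingletonClass E]
    [Countable E] [MeasurableSpace G]
    (f : E → G → E) (hf : ∀ x, Measurable (f x))
    (β : Measure G) [IsProbabilityMeasure β]
    {Ω : Type*} [MeasurableSpace Ω] (P : Measure Ω)
    (X : ℤ → Ω → E) (V : ℤ → Ω → G)
    (hV : ∀ n, Measurable (V n))
    (hiid_indep : iIndepFun V P)
    (hiid_law : ∀ n, Measure.map (V n) P = β)
    (hrec : ∀ n : ℤ, ∀ ω, X (n + 1) ω = f (X n ω) (V (n + 1) ω))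
    (hRosenblatt : ∃ l : ℕ, 0 < l ∧ ∃ c : E,
      0 < P {ω | ∀ x : E,
        (List.ofFn fun i : Fin l => V ((i : ℕ) + 1 : ℤ) ω).foldl f x = c}) :
    ∀ n : ℤ, ∃ g : ({k : ℤ // k ≤ n} → G) → E, Measurable g ∧
      ∀ᵐ ω ∂P, X n ω = g fun k => V k.val ω := by
  obtain ⟨l, -, c, hpos⟩ := hRosenblatt
  have hS := measurableSet_collapsingWords hf l c
  have hpi : Measure.pi (fun _ => β) (collapsingWords f l c) ≠ 0 := by
    rw [← map_window_eq_pi hV hiid_indep hiid_law 0 l,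
      Measure.map_apply (measurable_window hV 0 l) hS]
    convert hpos.ne' using 2
    ext ω
    unfold window
    simp [collapsingWords]
  intro n
  refine ⟨pastReadout f c l n, measurable_pastReadout hf c l n, ?_⟩
  filter_upwards [ae_exists_window_mem hV hiid_indep hiid_law hS hpi n] with ω hω
  exact (pastReadout_eq_of_exists_mem_collapsingWords f (x := (X · ω)) (hrec · ω) hω).symm

/-- Rosenblatt's sufficient condition: let `E` be countable and
`X_{n+1} = f(X_n, V_{n+1})` a Markov chain indexed by `ℤ`, where the `V_n` are i.i.d.
of law `β` and `V_{n+1}` is independent of `((X_k, V_k))_{k ≤ n}`. If some composition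
`f_{V_l} ∘ ⋯ ∘ f_{V_1}` is the constant map `c` with positive probability, then
`𝓕_n^X ⊆ 𝓕_n^V` for every `n`: each `X_n` is a.s. a measurable function of
`(V_k)_{k ≤ n}`. -/
theorem stmt_5 {E G : Type*} [MeasurableSpace E] [MeasurableSingletonClass E]
    [Countable E] [MeasurableSpace G]
    (f : E → G → E) (hf : ∀ x, Measurable (f x))
    (β : Measure G) [IsProbabilityMeasure β]
    {Ω : Type*} [MeasurableSpace Ω] (P : Measure Ω) [IsProbabilityMeasure P]
    (X : ℤ → Ω → E) (V : ℤ → Ω → G)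
    (hX : ∀ n, Measurable (X n)) (hV : ∀ n, Measurable (V n))
    (hiid_indep : iIndepFun V P)
    (hiid_law : ∀ n, Measure.map (V n) P = β)
    (hindep : ∀ n : ℤ,
      Indep (MeasurableSpace.comap (V (n + 1)) inferInstance)
        (⨆ k : ℤ, ⨆ _ : k ≤ n,
          MeasurableSpace.comap (X k) inferInstance ⊔
            MeasurableSpace.comap (V k) inferInstance) P)
    (hrec : ∀ n : ℤ, ∀ ω, X (n + 1) ω = f (X n ω) (V (n + 1) ω))
    (hRosenblatt : ∃ l : ℕ, 0 < l ∧ ∃ c : E,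
      0 < P {ω | ∀ x : E,
        (List.ofFn fun i : Fin l => V ((i : ℕ) + 1 : ℤ) ω).foldl f x = c}) :
    ∀ n : ℤ, ∃ g : ({k : ℤ // k ≤ n} → G) → E, Measurable g ∧
      ∀ᵐ ω ∂P, X n ω = g fun k => V k.val ω :=
  stmt_5_general f hf β P X V hV hiid_indep hiid_law hrec hRosenblatt
end

section
/- Let $E$ be countable and $\Pi_2$ the kernel on $E^2$ given by $\Pi_2((x,y),\cdot)=\mathrm{law}(f(x,V_1),f(y,V_1))$. If every pair of states $x,y\in E$ is accordable (i.e., the diagonal $D$ is accessible from $(x,y)$ under $\Pi_2$), then every stationary Markov chain for $\Pi_2$ lives on the diagonal: $P[(X_n,Y_n)\in D]=1$ for all $n$. -/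
/-!
Integrating the Markov property shows that the stationary law `α` of the pair chain is
invariant for `Π₂`, hence for every power `Π₂ ^ l`; and `Π₂ ^ l` moves `(x, y)` into the
diagonal `D` with exactly the probability that `l` common random maps merge `x` and `y`.
Since `D` is absorbing, integrating `p ↦ Π₂ ^ l (p, D)` against `α` gives
`α D ≥ α D + α {q} Π₂ ^ l (q, D)` for every atom `q ∉ D`; accordability makes the last
factor positive, so `α` charges no point off the diagonal.
-/

open MeasureTheory ProbabilityTheory
open scoped ENNReal

/-- Two states are accordable if some random composition `f_{V_l} ∘ ⋯ ∘ f_{V_1}`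
merges them with positive probability (the `V_i` being i.i.d. of law `β`);
equivalently, the diagonal is accessible from `(x, y)` for the pair kernel `Π₂`. -/
def AccordableStates {E G : Type*} [MeasurableSpace G]
    (f : E → G → E) (β : Measure G) (x y : E) : Prop :=
  ∃ l : ℕ, 0 < l ∧
    0 < Measure.pi (fun _ : Fin l => β)
      {v : Fin l → G |
        (List.ofFn v).foldl f x = (List.ofFn v).foldl f y}

namespace ProbabilityTheory.Kernel

variable {α : Type*} {mα : MeasurableSpace α} {κ : Kernel α α} {μ : Measure α}

theorem Invariant.pow (hκ : κ.Invariant μ) : ∀ n : ℕ, (κ ^ n).Invariant μ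
  | 0 => Measure.bind_dirac
  | n + 1 => by rw [pow_succ]; exact (hκ.pow n).comp hκ

theorem Invariant.measure_singleton_eq_zero [MeasurableSingletonClass α] [IsFiniteMeasure μ]
    (hκ : κ.Invariant μ) {D : Set α} (hD : MeasurableSet D) (hDabs : ∀ x ∈ D, κ x D = 1)
    {x₀ : α} (hx₀ : x₀ ∉ D) (hreach : κ x₀ D ≠ 0) : μ {x₀} = 0 := by
  have hle : μ D + μ {x₀} * κ x₀ D ≤ μ D + 0 := by
    calc μ D + μ {x₀} * κ x₀ D
        = ∫⁻ x, D.indicator 1 x + ({x₀} : Set α).indicator (fun _ => κ x₀ D) x ∂μ := by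
          rw [lintegral_add_left (measurable_one.indicator hD), lintegral_indicator_one hD,
            lintegral_indicator_const (measurableSet_singleton x₀), mul_comm]
      _ ≤ ∫⁻ x, κ x D ∂μ := by
          refine lintegral_mono fun x => ?_
          by_cases hx : x ∈ D
          · have hne : x ≠ x₀ := by rintro rfl; exact hx₀ hx
            simp [hx, hne, hDabs x hx]
          · by_cases hx' : x = x₀
            · subst hx'; simp [hx]
            · simp [hx, hx']
      _ = μ D := by rw [← Measure.bind_apply hD κ.aemeasurable, hκ.def]
      _ = μ D + 0 := (add_zero _).symm
  have := ENNReal.le_of_add_le_add_left (measure_ne_top μ D) hle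
  exact (mul_eq_zero.1 (nonpos_iff_eq_zero.1 this)).resolve_right hreach

end ProbabilityTheory.Kernel

theorem map_eq_bind_of_condExp_indicator {S Ω : Type*} [MeasurableSpace S]
    [MeasurableSingletonClass S] [Countable S] {m mΩ : MeasurableSpace Ω} (hm : m ≤ mΩ)
    {P : Measure Ω} [IsFiniteMeasure P] (κ : Kernel S S) [IsFiniteKernel κ] {X Y : Ω → S}
    (hX : Measurable X) (hY : Measurable Y)
    (hcond : ∀ q, P[{ω | Y ω = q}.indicator fun _ => (1 : ℝ) | m]
      =ᵐ[P] fun ω => (κ (X ω) {q}).toReal) :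
    P.map Y = (P.map X).bind κ := by
  refine Measure.ext_of_singleton fun q => ?_
  have hYq : MeasurableSet {ω | Y ω = q} := hY (measurableSet_singleton q)
  rw [← ENNReal.toReal_eq_toReal_iff' (measure_ne_top _ _) (measure_ne_top _ _),
    Measure.map_apply hY (measurableSet_singleton q),
    Measure.bind_apply (measurableSet_singleton q) κ.aemeasurable,
    lintegral_map (κ.measurable_coe (measurableSet_singleton q)) hX]
  calc (P (Y ⁻¹' {q})).toReal
      = ∫ ω, {ω | Y ω = q}.indicator (fun _ => (1 : ℝ)) ω ∂P := by
        rw [integral_indicator_const _ hYq, smul_eq_mul, mul_one]; rfl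
    _ = ∫ ω, (κ (X ω) {q}).toReal ∂P := by
        rw [← integral_condExp hm]; exact integral_congr_ae (hcond q)
    _ = (∫⁻ ω, κ (X ω) {q} ∂P).toReal :=
        integral_toReal ((κ.measurable_coe (measurableSet_singleton q)).comp hX).aemeasurable
          (.of_forall fun ω => measure_lt_top _ _)

section RandomMap

variable {E G : Type*} [MeasurableSpace E] [MeasurableSingletonClass E] [Countable E]
  [MeasurableSpace G] {F : E → G → E}

noncomputable def randomMapKernel (F : E → G → E) (β : Measure G) : Kernel E E :=
  Kernel.ofFunOfCountable fun x => β.map (F x)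

theorem randomMapKernel_apply (β : Measure G) (x : E) : randomMapKernel F β x = β.map (F x) :=
  rfl

theorem isMarkovKernel_randomMapKernel (hF : ∀ x, Measurable (F x)) (β : Measure G)
    [IsProbabilityMeasure β] : IsMarkovKernel (randomMapKernel F β) :=
  ⟨fun x => Measure.isProbabilityMeasure_map (hF x).aemeasurable⟩

theorem measurable_foldl_ofFn_s6 (hF : ∀ x, Measurable (F x)) :
    ∀ (l : ℕ) (x : E), Measurable fun v : Fin l → G => (List.ofFn v).foldl F x
  | 0, x => by simp
  | l + 1, x => by
    simp only [List.ofFn_succ, List.foldl_cons]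
    have hstep : Measurable fun p : E × (Fin l → G) => (List.ofFn p.2).foldl F p.1 :=
      measurable_from_prod_countable_right fun y => measurable_foldl_ofFn_s6 hF l y
    exact hstep.comp (((hF x).comp (measurable_pi_apply 0)).prodMk
      (measurable_pi_lambda _ fun i => measurable_pi_apply i.succ))

theorem randomMapKernel_pow_apply (hF : ∀ x, Measurable (F x)) (β : Measure G) [SigmaFinite β] :
    ∀ (l : ℕ) (x : E), (randomMapKernel F β ^ l) x =
      (Measure.pi fun _ : Fin l => β).map fun v => (List.ofFn v).foldl F x
  | 0, x => by
    rw [pow_zero, Measure.pi_of_empty]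
    ext s hs
    rw [Measure.map_apply (measurable_foldl_ofFn_s6 hF 0 x) hs,
      show (1 : Kernel E E) x = Measure.dirac x from Kernel.id_apply x]
    by_cases hx : x ∈ s <;> simp [hx]
  | l + 1, x => by
    refine Measure.ext_of_singleton fun y => ?_
    have hCK := Kernel.pow_add_apply_eq_lintegral (randomMapKernel F β) 1 l x
      (measurableSet_singleton y)
    rw [add_comm 1 l, pow_one] at hCK
    rw [hCK, Measure.map_apply (measurable_foldl_ofFn_s6 hF _ x) (measurableSet_singleton y)]
    -- split off the first step: `Measure.pi` on `Fin (l + 1)` is `β ⊗ Measure.pi` on `Fin l`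
    have hsplit := (measurePreserving_piFinSuccAbove (fun _ : Fin (l + 1) => β) 0).symm
    refine Eq.trans ?_
      (hsplit.measure_preimage_equiv ((fun v => (List.ofFn v).foldl F x) ⁻¹' {y}))
    rw [Measure.prod_apply (MeasurableEquiv.measurable _
        (measurable_foldl_ofFn_s6 hF _ x (measurableSet_singleton y))),
      randomMapKernel_apply, lintegral_map (measurable_of_countable _) (hF x)]
    refine lintegral_congr fun g => ?_
    rw [randomMapKernel_pow_apply hF β l,
      Measure.map_apply (measurable_foldl_ofFn_s6 hF _ _) (measurableSet_singleton y)]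
    congr 1
    ext w
    simp [MeasurableEquiv.piFinSuccAbove_symm_apply, Fin.insertNthEquiv, List.ofFn_succ]

end RandomMap

section PairChain

variable {E G : Type*} {f : E → G → E}

/-- `randomMapKernel (pairMap f) β` is the pair kernel `Π₂`. -/
def pairMap (f : E → G → E) (p : E × E) (g : G) : E × E := (f p.1 g, f p.2 g)

theorem foldl_pairMap (f : E → G → E) :
    ∀ (l : List G) (p : E × E), l.foldl (pairMap f) p = (l.foldl f p.1, l.foldl f p.2)
  | [], _ => rfl
  | g :: l, p => foldl_pairMap f l (pairMap f p g)

variable [MeasurableSpace E] [MeasurableSpace G]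

theorem measurable_pairMap (hf : ∀ x, Measurable (f x)) (p : E × E) :
    Measurable (pairMap f p) :=
  (hf p.1).prodMk (hf p.2)

theorem randomMapKernel_pairMap_pow_apply_diagonal [MeasurableSingletonClass E] [Countable E]
    (hf : ∀ x, Measurable (f x)) (β : Measure G) [SigmaFinite β] (l : ℕ) (p : E × E) :
    (randomMapKernel (pairMap f) β ^ l) p (Set.diagonal E) =
      Measure.pi (fun _ : Fin l => β)
        {v | (List.ofFn v).foldl f p.1 = (List.ofFn v).foldl f p.2} := by
  rw [randomMapKernel_pow_apply (measurable_pairMap hf) β l p,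
    Measure.map_apply (measurable_foldl_ofFn_s6 (measurable_pairMap hf) l p) measurableSet_diagonal]
  congr 1
  ext v
  simp [foldl_pairMap]

end PairChain

/-- if every pair of states of the countable set `E` is accordable, then
every stationary Markov chain `(X_n, Y_n)` for the pair kernel
`Π₂((x,y),·) = law (f x V₁, f y V₁)` lives on the diagonal. -/
theorem stmt_6 {E G : Type*} [MeasurableSpace E] [MeasurableSingletonClass E]
    [Countable E] [MeasurableSpace G]
    (f : E → G → E) (hf : ∀ x, Measurable (f x))
    (β : Measure G) [IsProbabilityMeasure β]
    (hacc : ∀ x y : E, AccordableStates f β x y)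
    {Ω : Type*} [MeasurableSpace Ω] (P : Measure Ω) [IsProbabilityMeasure P]
    (Z : ℤ → Ω → E × E) (hZmeas : ∀ n, Measurable (Z n))
    (α : Measure (E × E))
    (hstat : ∀ n : ℤ, Measure.map (Z n) P = α)
    (hMarkov : ∀ n : ℤ, ∀ q : E × E,
      P[(Set.indicator {ω | Z (n + 1) ω = q} fun _ => (1 : ℝ)) |
          ⨆ k : ℤ, ⨆ _ : k ≤ n, MeasurableSpace.comap (Z k) inferInstance]
        =ᵐ[P] fun ω =>
          ((Measure.map (fun v => (f (Z n ω).1 v, f (Z n ω).2 v)) β) {q}).toReal) :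
    ∀ n : ℤ, P {ω | (Z n ω).1 = (Z n ω).2} = 1 := by
  set κ := randomMapKernel (pairMap f) β
  have := isMarkovKernel_randomMapKernel (measurable_pairMap hf) β
  have : IsProbabilityMeasure α :=
    hstat 0 ▸ Measure.isProbabilityMeasure_map (hZmeas 0).aemeasurable
  have hinv : κ.Invariant α := by
    have hstep := map_eq_bind_of_condExp_indicator (iSup₂_le fun k _ => (hZmeas k).comap_le)
      κ (hZmeas 0) (hZmeas (0 + 1)) (hMarkov 0)
    rw [hstat, hstat] at hstep
    exact hstep.symm
  have hoff : α (Set.diagonal E)ᶜ = 0 := by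
    rw [← Set.biUnion_of_singleton (Set.diagonal E)ᶜ,
      measure_biUnion_null_iff (Set.to_countable _)]
    intro q hq
    obtain ⟨l, -, hmerge⟩ := hacc q.1 q.2
    refine (hinv.pow l).measure_singleton_eq_zero measurableSet_diagonal (fun p hp => ?_) hq ?_
    · rw [randomMapKernel_pairMap_pow_apply_diagonal hf, Set.mem_diagonal_iff.1 hp]
      simp
    · rw [randomMapKernel_pairMap_pow_apply_diagonal hf]
      exact hmerge.ne'
  intro n
  rw [show {ω | (Z n ω).1 = (Z n ω).2} = Z n ⁻¹' Set.diagonal E from rfl,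
    ← Measure.map_apply (hZmeas n) measurableSet_diagonal, hstat n]
  exact (prob_compl_eq_zero_iff measurableSet_diagonal).1 hoff
end

section
/- Let $E$ be a finite set, $H\subset E^E$ a set of maps, and $S$ the semigroup generated by $H$ under composition. Call $x,y\in E$ accordable if there exists $s\in S$ with $s(x)=s(y)$. Let $M$ be the maximum cardinality of a subset of $E$ whose elements are pairwise non-accordable. If $r\in S$ satisfies $\mathrm{Card}\,r(E)=\min_{s\in S}\mathrm{Card}\,s(E)$, then $r(E)$ consists of exactly $M$ pairwise non-accordable points. -/
/-!
Every element of `S` is injective on a pairwise non-accordable set, so its image has at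
least `M` points. Conversely, if two points of `r(E)` were merged by some `s ∈ S`, then
`s ∘ r ∈ S` would have a strictly smaller image than `r`; so when `Card r(E)` is minimal,
`r(E)` is itself pairwise non-accordable and hence has at most `M` points.
-/

/-- Membership in the sub-semigroup of `E → E` generated by `H` under composition. -/
inductive InSemigroup {E : Type*} (H : Set (E → E)) : (E → E) → Prop
  | base : ∀ h ∈ H, InSemigroup H h
  | comp : ∀ s t : E → E, InSemigroup H s → InSemigroup H t → InSemigroup H (s ∘ t)

/-- Two states are accordable if some element of the generated semigroup merges them. -/
def Accordable {E : Type*} (H : Set (E → E)) (x y : E) : Prop :=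
  ∃ s : E → E, InSemigroup H s ∧ s x = s y

open Finset

namespace InSemigroup

variable {E : Type*} {H : Set (E → E)} {s r : E → E}

theorem injOn_of_pairwise_not_accordable (hs : InSemigroup H s) {A : Set E}
    (hA : A.Pairwise fun x y => ¬ Accordable H x y) : A.InjOn s :=
  fun _ hx _ hy hxy => by_contra fun hne => hA hx hy hne ⟨s, hs, hxy⟩

variable [Fintype E] [DecidableEq E]

theorem card_le_card_image_of_pairwise_not_accordable (hs : InSemigroup H s) {A : Finset E}
    (hA : (A : Set E).Pairwise fun x y => ¬ Accordable H x y) :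
    #A ≤ #(univ.image s) := by
  rw [← card_image_of_injOn (hs.injOn_of_pairwise_not_accordable hA)]
  exact card_le_card (image_subset_image A.subset_univ)

theorem pairwise_not_accordable_image_of_card_image_minimal (hr : InSemigroup H r)
    (hmin : ∀ s : E → E, InSemigroup H s → #(univ.image r) ≤ #(univ.image s)) :
    ((univ.image r : Finset E) : Set E).Pairwise fun x y => ¬ Accordable H x y := by
  rintro x hx y hy hxy ⟨s, hs, hsxy⟩
  have hnotInj : ¬ Set.InjOn s (univ.image r : Finset E) := fun hinj => hxy (hinj hx hy hsxy)
  have hlt : #(univ.image (s ∘ r)) < #(univ.image r) := by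
    rw [← image_image]
    exact lt_of_le_of_ne card_image_le (mt card_image_iff.mp hnotInj)
  exact (hmin _ (hs.comp s r hr)).not_gt hlt

end InSemigroup

theorem stmt_9_general {E : Type*} [Fintype E] [DecidableEq E]
    (H : Set (E → E)) (M : ℕ)
    (hM : IsGreatest {m : ℕ | ∃ A : Finset E, A.card = m ∧
        ∀ x ∈ A, ∀ y ∈ A, x ≠ y → ¬ Accordable H x y} M)
    (r : E → E) (hr : InSemigroup H r)
    (hmin : ∀ s : E → E, InSemigroup H s →
      (Finset.univ.image r).card ≤ (Finset.univ.image s).card) :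
    (Finset.univ.image r).card = M ∧
      ∀ x ∈ Finset.univ.image r, ∀ y ∈ Finset.univ.image r, x ≠ y →
        ¬ Accordable H x y := by
  have himage := hr.pairwise_not_accordable_image_of_card_image_minimal hmin
  obtain ⟨⟨A, rfl, hA⟩, hupper⟩ := hM
  refine ⟨le_antisymm ?_ ?_, fun x hx y hy => himage hx hy⟩
  · exact hupper ⟨_, rfl, fun x hx y hy => himage hx hy⟩
  · exact hr.card_le_card_image_of_pairwise_not_accordable fun x hx y hy => hA x hx y hy

/-- if `r` belongs to the semigroup `S` generated by `H` and the cardinality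
of its image is minimal among elements of `S`, then `r(E)` consists of exactly `M`
pairwise non-accordable points, where `M` is the maximal cardinality of a set of
pairwise non-accordable states. -/
theorem stmt_9 {E : Type*} [Fintype E] [DecidableEq E] [Nonempty E]
    (H : Set (E → E)) (M : ℕ)
    (hM : IsGreatest {m : ℕ | ∃ A : Finset E, A.card = m ∧
        ∀ x ∈ A, ∀ y ∈ A, x ≠ y → ¬ Accordable H x y} M)
    (r : E → E) (hr : InSemigroup H r)
    (hmin : ∀ s : E → E, InSemigroup H s →
      (Finset.univ.image r).card ≤ (Finset.univ.image s).card) :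
    (Finset.univ.image r).card = M ∧
      ∀ x ∈ Finset.univ.image r, ∀ y ∈ Finset.univ.image r, x ≠ y →
        ¬ Accordable H x y :=
  stmt_9_general H M hM r hr hmin
end

section
/- Let $E$ be finite and $(T_n)_{n\in\mathbf{N}}$ the left random walk on the semigroup $S\subset E^E$ defined by $T_0=\mathrm{id}$ and $T_n = f_{V_0}\circ\cdots\circ f_{V_{-n+1}}$ with i.i.d. $V_k$. If $r\in S$ is a recurrent state for $(T_n)$, then for every $s\in S$ accessible from the identity, $\mathrm{Card}\,r(E)\le\mathrm{Card}\,s(E)$; in particular $\mathrm{Card}\,r(E)=\min_{s\in S}\mathrm{Card}\,s(E)$. -/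
/-- `t` is accessible from `r` for the left random walk on the semigroup generated
by `H`: either `t = r` or `t = u ∘ r` for some `u` in the semigroup. -/
def Accessible {E : Type*} (H : Set (E → E)) (r t : E → E) : Prop :=
  t = r ∨ ∃ u : E → E, InSemigroup H u ∧ t = u ∘ r

/-!
If `r` is recurrent, then `r` is accessible from `s ∘ r` for every `s` in the semigroup,
so `r = s ∘ r` or `r = u ∘ s ∘ r`; in both cases `r(E)` is no larger than `s(E)`.
-/

section CardImage

variable {E : Type*} [Fintype E] [DecidableEq E]

lemma card_image_comp_le_left (a b : E → E) :
    (Finset.univ.image (a ∘ b)).card ≤ (Finset.univ.image a).card := by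
  rw [← Finset.image_image]
  exact Finset.card_le_card (Finset.image_subset_image (Finset.subset_univ _))

lemma card_image_comp_le_right (a b : E → E) :
    (Finset.univ.image (a ∘ b)).card ≤ (Finset.univ.image b).card := by
  rw [← Finset.image_image]
  exact Finset.card_image_le

lemma card_image_le_of_accessible_comp {H : Set (E → E)} {r s : E → E}
    (hacc : Accessible H (s ∘ r) r) :
    (Finset.univ.image r).card ≤ (Finset.univ.image s).card := by
  rcases hacc with h | ⟨u, -, h⟩
  · calc (Finset.univ.image r).card = (Finset.univ.image (s ∘ r)).card := by rw [← h]
      _ ≤ _ := card_image_comp_le_left s r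
  · calc (Finset.univ.image r).card = (Finset.univ.image (u ∘ s ∘ r)).card := by rw [← h]
      _ ≤ (Finset.univ.image (s ∘ r)).card := card_image_comp_le_right u (s ∘ r)
      _ ≤ _ := card_image_comp_le_left s r

end CardImage

theorem stmt_10_general {E : Type*} [Fintype E] [DecidableEq E]
    (H : Set (E → E)) (r : E → E) (hr : InSemigroup H r)
    (hrec : ∀ t : E → E, Accessible H r t → Accessible H t r) :
    (∀ s : E → E, InSemigroup H s → Accessible H id s →
        (Finset.univ.image r).card ≤ (Finset.univ.image s).card) ∧
      IsLeast {m : ℕ | ∃ s : E → E, InSemigroup H s ∧ (Finset.univ.image s).card = m}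
        (Finset.univ.image r).card := by
  have key : ∀ s : E → E, InSemigroup H s →
      (Finset.univ.image r).card ≤ (Finset.univ.image s).card := fun s hs =>
    card_image_le_of_accessible_comp (hrec _ (Or.inr ⟨s, hs, rfl⟩))
  refine ⟨fun s hs _ => key s hs, ⟨r, hr, rfl⟩, ?_⟩
  rintro m ⟨s, hs, rfl⟩
  exact key s hs

/-- if `r` is a recurrent state of the left random walk `(T_n)` on the
semigroup generated by `H` (i.e. whenever `t` is accessible from `r`, then `r` is
accessible from `t`), then `Card r(E) ≤ Card s(E)` for every `s` in the semigroup
(every such `s` being accessible from the identity); in particular `Card r(E)`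
is the minimum of `Card s(E)` over the semigroup. -/
theorem stmt_10 {E : Type*} [Fintype E] [DecidableEq E] [Nonempty E]
    (H : Set (E → E)) (r : E → E) (hr : InSemigroup H r)
    (hrec : ∀ t : E → E, Accessible H r t → Accessible H t r) :
    (∀ s : E → E, InSemigroup H s → Accessible H id s →
        (Finset.univ.image r).card ≤ (Finset.univ.image s).card) ∧
      IsLeast {m : ℕ | ∃ s : E → E, InSemigroup H s ∧ (Finset.univ.image s).card = m}
        (Finset.univ.image r).card :=
  stmt_10_general H r hr hrec
end

section
/- Let $E$ be a finite set, $H\subset E^E$, $S$ the semigroup generated by $H$, and suppose there is a probability $\alpha$ on $H$ with $\sum_{h\in H}\alpha(h)\,\mathrm{Card}\,h^{-1}\{y\}=1$ for every $y\in E$. Call states simultaneously accordable if some $s\in S$ maps them all to one point, and let $N$ be the maximal number of simultaneously accordable states. If $F\subset E$ has $N$ simultaneously accordable elements, then for every $h\in H$ with $\alpha(h)>0$, the preimage $h^{-1}(F)$ also has exactly $N$ elements, and these are simultaneously accordable. -/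
/-- A finite set of states is simultaneously accordable if some element of the
generated semigroup maps all of them to a single point. -/
def SimultAccordable {E : Type*} (H : Set (E → E)) (A : Finset E) : Prop :=
  ∃ s : E → E, InSemigroup H s ∧ ∃ c : E, ∀ x ∈ A, s x = c

/-! Averaging argument: summing the invariance hypothesis over `y ∈ F` shows that the
`α`-weighted mean of `#h⁻¹(F)` over `h ∈ H` is `#F = N`. Each `h⁻¹(F)` is accordable (by
`s ∘ h`, if `s` accords `F`), so it has at most `N` elements; a mean of numbers `≤ N` with
positive weights equals `N` only if every one of them does. -/

open Finset

section

variable {E : Type*}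

theorem SimultAccordable.preimage [Fintype E] [DecidableEq E] {H : Set (E → E)} {F : Finset E}
    (hF : SimultAccordable H F) {h : E → E} (hh : InSemigroup H h) :
    SimultAccordable H {x | h x ∈ F} := by
  obtain ⟨s, hs, c, hc⟩ := hF
  exact ⟨s ∘ h, .comp s h hs hh, c, fun x hx => hc (h x) (mem_filter.mp hx).2⟩

theorem card_preimage_eq_sum_card_fiber [Fintype E] [DecidableEq E] (h : E → E)
    (F : Finset E) : #{x | h x ∈ F} = ∑ y ∈ F, #{x | h x = y} := by
  rw [card_eq_sum_card_fiberwise (s := {x | h x ∈ F}) fun x hx => (mem_filter.mp hx).2]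
  refine sum_congr rfl fun y hy => congrArg card ?_
  ext x
  simp only [mem_filter, mem_univ, true_and, and_iff_right_iff_imp]
  exact fun hxy => hxy ▸ hy

theorem sum_mul_card_preimage_eq_card {R : Type*} [CommSemiring R] [Fintype E] [DecidableEq E]
    (H : Finset (E → E)) (α : (E → E) → R)
    (hinv : ∀ y : E, ∑ h ∈ H, α h * (#{x | h x = y} : R) = 1)
    (F : Finset E) : ∑ h ∈ H, α h * (#{x | h x ∈ F} : R) = #F := by
  calc ∑ h ∈ H, α h * (#{x | h x ∈ F} : R)
      = ∑ h ∈ H, ∑ y ∈ F, α h * (#{x | h x = y} : R) := by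
        simp only [card_preimage_eq_sum_card_fiber, Nat.cast_sum, mul_sum]
    _ = ∑ y ∈ F, ∑ h ∈ H, α h * (#{x | h x = y} : R) := sum_comm
    _ = #F := by simp [hinv]

theorem eq_of_sum_mul_eq_of_le {ι R : Type*} [Field R] [LinearOrder R] [IsStrictOrderedRing R]
    {s : Finset ι} {w f : ι → R} {b : R}
    (hw_pos : ∀ i ∈ s, 0 < w i) (hw_sum : ∑ i ∈ s, w i = 1) (hf : ∀ i ∈ s, f i ≤ b)
    (hsum : ∑ i ∈ s, w i * f i = b) : ∀ i ∈ s, f i = b := by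
  have hsum' : ∑ i ∈ s, w i * f i = ∑ i ∈ s, w i * b := by rw [← sum_mul, hw_sum, one_mul, hsum]
  have hle : ∀ i ∈ s, w i * f i ≤ w i * b :=
    fun i hi => mul_le_mul_of_nonneg_left (hf i hi) (hw_pos i hi).le
  intro i hi
  exact mul_left_cancel₀ (hw_pos i hi).ne' ((sum_eq_sum_iff_of_le hle).mp hsum' i hi)

end

theorem stmt_11_general {E : Type*} [Fintype E] [DecidableEq E]
    (H : Finset (E → E)) (α : (E → E) → ℝ)
    (hα_pos : ∀ h ∈ H, 0 < α h) (hα_sum : ∑ h ∈ H, α h = 1)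
    (hinv : ∀ y : E, ∑ h ∈ H, α h * ((Finset.univ.filter fun x => h x = y).card : ℝ) = 1)
    (N : ℕ)
    (hN : IsGreatest {m : ℕ | ∃ A : Finset E, A.card = m ∧ SimultAccordable (↑H) A} N)
    (F : Finset E) (hF : F.card = N) (hFacc : SimultAccordable (↑H) F) :
    ∀ h ∈ H, (Finset.univ.filter fun x => h x ∈ F).card = N ∧
      SimultAccordable (↑H) (Finset.univ.filter fun x => h x ∈ F) := by
  have hacc : ∀ h ∈ H, SimultAccordable (↑H) {x | h x ∈ F} :=
    fun h hh => hFacc.preimage (.base h (mem_coe.mpr hh))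
  have hle : ∀ h ∈ H, (#{x | h x ∈ F} : ℝ) ≤ N :=
    fun h hh => by exact_mod_cast hN.2 ⟨_, rfl, hacc h hh⟩
  have hsum : ∑ h ∈ H, α h * (#{x | h x ∈ F} : ℝ) = N := by
    rw [sum_mul_card_preimage_eq_card H α hinv F, hF]
  intro h hh
  exact ⟨by exact_mod_cast eq_of_sum_mul_eq_of_le hα_pos hα_sum hle hsum h hh, hacc h hh⟩

/-- assume the uniform measure on the finite set `E` is invariant, i.e.
`∑ h ∈ H, α h * Card h⁻¹{y} = 1` for every `y`, where `α` is a probability on `H`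
charging every point of `H`. If `F ⊆ E` consists of `N` simultaneously accordable
elements (`N` being the maximal number of simultaneously accordable states), then for
every `h ∈ H` the preimage `h⁻¹(F)` also has exactly `N` elements, and these are
simultaneously accordable. -/
theorem stmt_11 {E : Type*} [Fintype E] [DecidableEq E] [Nonempty E]
    (H : Finset (E → E)) (α : (E → E) → ℝ)
    (hα_pos : ∀ h ∈ H, 0 < α h) (hα_sum : ∑ h ∈ H, α h = 1)
    (hinv : ∀ y : E, ∑ h ∈ H, α h * ((Finset.univ.filter fun x => h x = y).card : ℝ) = 1)
    (N : ℕ)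
    (hN : IsGreatest {m : ℕ | ∃ A : Finset E, A.card = m ∧ SimultAccordable (↑H) A} N)
    (F : Finset E) (hF : F.card = N) (hFacc : SimultAccordable (↑H) F) :
    ∀ h ∈ H, (Finset.univ.filter fun x => h x ∈ F).card = N ∧
      SimultAccordable (↑H) (Finset.univ.filter fun x => h x ∈ F) :=
  stmt_11_general H α hα_pos hα_sum hinv N hN F hF hFacc
end

section
/- Let $E$ be finite, $S\subset E^E$ a composition semigroup, and $N$ the maximal number of simultaneously accordable states. Let $F_1,\dots,F_k$ be pairwise disjoint subsets of $E$, each with $N$ simultaneously accordable elements, and $s\in S$ constant on each $F_i$ with value $c_i$. Then the points $c_1,\dots,c_k$ are pairwise non-accordable; in particular $k\le M$, the maximal number of pairwise non-accordable states. -/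
/-!
If `t` merged `c i` and `c j`, then `t ∘ s` would map all `2N` points of `F i ∪ F j` to one
point, while at most `N ≥ 1` points can be accorded simultaneously. The points `c i` are
therefore pairwise non-accordable, in particular distinct, and so there are at most `M` of them.
-/

section

variable {E : Type*} {H : Set (E → E)}

theorem Accordable.refl {s : E → E} (hs : InSemigroup H s) (x : E) : Accordable H x x :=
  ⟨s, hs, rfl⟩

theorem SimultAccordable.singleton {s : E → E} (hs : InSemigroup H s) (x : E) :
    SimultAccordable H {x} :=
  ⟨s, hs, s x, by simp⟩

theorem SimultAccordable.union_of_accordable [DecidableEq E] {A B : Finset E} {s : E → E}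
    {a b : E} (hs : InSemigroup H s) (hsA : ∀ x ∈ A, s x = a) (hsB : ∀ x ∈ B, s x = b)
    (hab : Accordable H a b) : SimultAccordable H (A ∪ B) := by
  obtain ⟨t, ht, hta⟩ := hab
  refine ⟨t ∘ s, .comp t s ht hs, t a, fun x hx => ?_⟩
  rcases Finset.mem_union.mp hx with hxA | hxB
  · simp [hsA x hxA]
  · simp [hsB x hxB, hta]

theorem not_accordable_of_card_eq_max {N : ℕ}
    (hN : N ∈ upperBounds {m : ℕ | ∃ A : Finset E, A.card = m ∧ SimultAccordable H A})
    {A B : Finset E} (hA : A.card = N) (hB : B.card = N) (hAB : Disjoint A B)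
    {s : E → E} {a b : E} (hs : InSemigroup H s)
    (hsA : ∀ x ∈ A, s x = a) (hsB : ∀ x ∈ B, s x = b) :
    ¬ Accordable H a b := by
  classical
  intro hab
  have hunion : (A ∪ B).card ≤ N :=
    hN ⟨A ∪ B, rfl, .union_of_accordable hs hsA hsB hab⟩
  rw [Finset.card_union_of_disjoint hAB, hA, hB] at hunion
  have hpos : 1 ≤ N := hN ⟨{a}, Finset.card_singleton a, .singleton hs a⟩
  omega

theorem card_le_of_pairwise_not_accordable {ι : Type*} [Fintype ι] {M : ℕ}
    (hM : M ∈ upperBounds {m : ℕ | ∃ A : Finset E, A.card = m ∧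
        ∀ x ∈ A, ∀ y ∈ A, x ≠ y → ¬ Accordable H x y})
    {s : E → E} (hs : InSemigroup H s) {c : ι → E}
    (hc : ∀ i j, i ≠ j → ¬ Accordable H (c i) (c j)) :
    Fintype.card ι ≤ M := by
  classical
  have hinj : Function.Injective c := fun i j hij => by
    by_contra hne
    exact hc i j hne (hij ▸ .refl hs (c i))
  refine hM ⟨Finset.univ.image c, Finset.card_image_of_injective _ hinj, ?_⟩
  simp only [Finset.mem_image, Finset.mem_univ, true_and]
  rintro _ ⟨i, rfl⟩ _ ⟨j, rfl⟩ hne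
  exact hc i j (fun h => hne (h ▸ rfl))

end

theorem stmt_13_general {E : Type*}
    (H : Set (E → E)) (N M : ℕ)
    (hN : IsGreatest {m : ℕ | ∃ A : Finset E, A.card = m ∧ SimultAccordable H A} N)
    (hM : IsGreatest {m : ℕ | ∃ A : Finset E, A.card = m ∧
        ∀ x ∈ A, ∀ y ∈ A, x ≠ y → ¬ Accordable H x y} M)
    (k : ℕ) (F : Fin k → Finset E)
    (hdisj : ∀ i j : Fin k, i ≠ j → Disjoint (F i) (F j))
    (hcard : ∀ i, (F i).card = N)
    (s : E → E) (hs : InSemigroup H s)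
    (c : Fin k → E) (hc : ∀ i, ∀ x ∈ F i, s x = c i) :
    (∀ i j : Fin k, i ≠ j → ¬ Accordable H (c i) (c j)) ∧ k ≤ M := by
  have hpairwise : ∀ i j : Fin k, i ≠ j → ¬ Accordable H (c i) (c j) := fun i j hij =>
    not_accordable_of_card_eq_max hN.2 (hcard i) (hcard j) (hdisj i j hij) hs (hc i) (hc j)
  refine ⟨hpairwise, ?_⟩
  simpa using card_le_of_pairwise_not_accordable hM.2 hs hpairwise

/-- if `F 1, …, F k` are pairwise disjoint subsets of `E`, each consisting
of `N` simultaneously accordable elements (`N` being the maximal number of simultaneously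
accordable states), and `s` in the semigroup is constant on each `F i` with value `c i`,
then the points `c 1, …, c k` are pairwise non-accordable; in particular `k ≤ M`, the
maximal number of pairwise non-accordable states. -/
theorem stmt_13 {E : Type*} [Fintype E] [DecidableEq E] [Nonempty E]
    (H : Set (E → E)) (N M : ℕ)
    (hN : IsGreatest {m : ℕ | ∃ A : Finset E, A.card = m ∧ SimultAccordable H A} N)
    (hM : IsGreatest {m : ℕ | ∃ A : Finset E, A.card = m ∧
        ∀ x ∈ A, ∀ y ∈ A, x ≠ y → ¬ Accordable H x y} M)
    (k : ℕ) (F : Fin k → Finset E)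
    (hdisj : ∀ i j : Fin k, i ≠ j → Disjoint (F i) (F j))
    (hcard : ∀ i, (F i).card = N) (hacc : ∀ i, SimultAccordable H (F i))
    (s : E → E) (hs : InSemigroup H s)
    (c : Fin k → E) (hc : ∀ i, ∀ x ∈ F i, s x = c i) :
    (∀ i j : Fin k, i ≠ j → ¬ Accordable H (c i) (c j)) ∧ k ≤ M :=
  stmt_13_general H N M hN hM k F hdisj hcard s hs c hc
end

section
/- (Vinokourov's example.) Let $(X_n)_{n\in\mathbf{Z}}$ be a stationary Markov chain on $\{-1,1\}$ with transition probabilities $p(1,1)=p(-1,-1)=p\in(0,1)$ and $p(1,-1)=p(-1,1)=1-p$, and set $V_{n+1}=X_n X_{n+1}$. Then: (a) the $V_n$ are i.i.d. of law $p\delta_1+(1-p)\delta_{-1}$, with $V_{n+1}$ independent of $\sigma(X_k:k\le n)$; (b) $X_n$ is independent of $\sigma(V_k:k\in\mathbf{Z})$ and uniformly distributed on $\{-1,1\}$; (c) $\sigma(X_k:k\le n)=\sigma(V_k:k\le n)\vee\sigma(X_n)$. -/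
/-!
On `{X n = y}` the Markov property gives `P(V (n+1) = v | σ(X_k : k ≤ n)) = p` or `1 - p`
according to `v` alone, not `y`, so each increment is independent of the past of `X`. An adapted
sequence independent of the past is mutually independent, and `σ(V_k : k > m)` is independent of
`σ(X_k : k ≤ m)`. Multiplying a uniform sign by a sign measurable for a σ-algebra it is
independent of keeps it uniform and independent, so by `X (n+1) = X n * V (n+1)` every `X n` with
`n ≥ m` is independent of `σ(V_k : k > m)`, hence of all the increments. Conversely
`X (k-1) = V k * X k` recovers the past of `X` from `X n` and the past increments.
-/

open MeasureTheory ProbabilityTheory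
open scoped ENNReal

namespace ProbabilityTheory

variable {Ω : Type*} {m mΩ : MeasurableSpace Ω} {P : Measure Ω}

lemma measure_inter_preimage_one_add_neg_one {W : Ω → ℤ} (hW : Measurable W)
    (hW₁ : ∀ ω, W ω = 1 ∨ W ω = -1) (S : Set Ω) :
    P (S ∩ W ⁻¹' {1}) + P (S ∩ W ⁻¹' {-1}) = P S := by
  have : S ∩ W ⁻¹' {-1} = S \ W ⁻¹' {1} := by
    ext ω
    rcases hW₁ ω with h | h <;> simp [h]
  rw [this, measure_inter_add_sdiff S (hW (measurableSet_singleton 1))]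

lemma measure_inter_eq_ofReal_mul_of_condExp_indicator_ae_eq [IsFiniteMeasure P]
    (hm : m ≤ mΩ) {E A : Set Ω} (hE : MeasurableSet E)
    (hA : MeasurableSet[m] A) {g : Ω → ℝ} {c : ℝ} (hc : 0 ≤ c)
    (hcond : P[E.indicator (fun _ ↦ (1 : ℝ)) | m] =ᵐ[P] g) (hgA : ∀ ω ∈ A, g ω = c) :
    P (A ∩ E) = ENNReal.ofReal c * P A := by
  have hreal : P.real (A ∩ E) = c * P.real A := by
    calc P.real (A ∩ E) = ∫ ω in A, E.indicator (fun _ ↦ (1 : ℝ)) ω ∂P := by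
          rw [setIntegral_indicator hE, setIntegral_const, smul_eq_mul, mul_one]
      _ = ∫ ω in A, g ω ∂P := by
          rw [← setIntegral_condExp hm ((integrable_const (1 : ℝ)).indicator hE) hA]
          exact setIntegral_congr_ae (hm A hA) (hcond.mono fun ω hω _ ↦ hω)
      _ = c * P.real A := by
          rw [setIntegral_congr_fun (hm A hA) hgA, setIntegral_const, smul_eq_mul, mul_comm]
  rw [← ofReal_measureReal, hreal, ENNReal.ofReal_mul hc, ofReal_measureReal]

lemma indep_comap_of_measure_inter_preimage_singleton {β : Type*} [mβ : MeasurableSpace β]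
    [Countable β] [MeasurableSingletonClass β] {W : Ω → β} (hW : Measurable W)
    (h : ∀ b B, MeasurableSet[m] B → P (W ⁻¹' {b} ∩ B) = P (W ⁻¹' {b}) * P B) :
    Indep (mβ.comap W) m P := by
  rw [Indep_iff]
  rintro _ B ⟨S, hS, rfl⟩ hB
  have hmap : (P.restrict B).map W = P B • P.map W := Measure.ext_of_singleton fun b ↦ by
    rw [Measure.map_apply hW (measurableSet_singleton b),
      Measure.restrict_apply (hW (measurableSet_singleton b)), Measure.smul_apply,
      Measure.map_apply hW (measurableSet_singleton b), h b B hB, smul_eq_mul, mul_comm]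
  have := congrArg (· S) hmap
  simp only [Measure.map_apply hW hS, Measure.restrict_apply (hW hS), Measure.smul_apply,
    smul_eq_mul] at this
  rw [this, mul_comm]

lemma indep_comap_mul_of_indep [IsProbabilityMeasure P] (hm : m ≤ mΩ) {Y Z : Ω → ℤ}
    (hY : Measurable Y) (hZ : Measurable[m] Z) (hZ₁ : ∀ ω, Z ω = 1 ∨ Z ω = -1)
    (hY_symm : ∀ b, P (Y ⁻¹' {-b}) = P (Y ⁻¹' {b}))
    (hYm : Indep (MeasurableSpace.comap Y inferInstance) m P) :
    Indep (MeasurableSpace.comap (Y * Z) inferInstance) m P := by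
  have hZ' : Measurable Z := hZ.mono hm le_rfl
  have key : ∀ b B, MeasurableSet[m] B → P ((Y * Z) ⁻¹' {b} ∩ B) = P (Y ⁻¹' {b}) * P B := by
    intro b B hB
    have hind : ∀ y z, P (Y ⁻¹' {y} ∩ (Z ⁻¹' {z} ∩ B)) = P (Y ⁻¹' {y}) * P (Z ⁻¹' {z} ∩ B) :=
      fun y z ↦ (Indep_iff _ _ _).1 hYm _ _ ⟨{y}, measurableSet_singleton y, rfl⟩
        ((hZ (measurableSet_singleton z)).inter hB)
    calc P ((Y * Z) ⁻¹' {b} ∩ B)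
        = P ((Y * Z) ⁻¹' {b} ∩ B ∩ Z ⁻¹' {1}) + P ((Y * Z) ⁻¹' {b} ∩ B ∩ Z ⁻¹' {-1}) :=
          (measure_inter_preimage_one_add_neg_one hZ' hZ₁ _).symm
      _ = P (Y ⁻¹' {b} ∩ (Z ⁻¹' {1} ∩ B)) + P (Y ⁻¹' {-b} ∩ (Z ⁻¹' {-1} ∩ B)) := by
          congr 2 <;> ext ω <;> rcases hZ₁ ω with h | h <;> simp [h, neg_eq_iff_eq_neg]
      _ = P (Y ⁻¹' {b}) * (P (B ∩ Z ⁻¹' {1}) + P (B ∩ Z ⁻¹' {-1})) := by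
          rw [hind, hind, hY_symm, mul_add, Set.inter_comm B, Set.inter_comm B]
      _ = P (Y ⁻¹' {b}) * P B := by rw [measure_inter_preimage_one_add_neg_one hZ' hZ₁]
  refine indep_comap_of_measure_inter_preimage_singleton (hY.mul hZ') fun b B hB ↦ ?_
  rw [key b B hB, ← Set.inter_univ ((Y * Z) ⁻¹' {b}), key b _ MeasurableSet.univ, measure_univ,
    mul_one]

section IndepOfPast

variable {ℱ : Filtration ℤ mΩ} {G : ℤ → MeasurableSpace Ω}

lemma measure_inter_biInter_eq_mul_prod_of_indep_succ (hGℱ : ∀ k, G k ≤ ℱ k)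
    (hG : ∀ n, Indep (G (n + 1)) (ℱ n) P) {n : ℤ} {A : Set Ω} (hA : MeasurableSet[ℱ n] A)
    {s : Finset ℤ} (hs : ∀ k ∈ s, n < k) {t : ℤ → Set Ω}
    (ht : ∀ k ∈ s, MeasurableSet[G k] (t k)) :
    P (A ∩ ⋂ k ∈ s, t k) = P A * ∏ k ∈ s, P (t k) := by
  induction s using Finset.induction_on_max with
  | empty => simp
  | insert a s has ih =>
    have hpast : MeasurableSet[ℱ (a - 1)] (A ∩ ⋂ k ∈ s, t k) := by
      refine (ℱ.mono (Int.le_sub_one_of_lt (hs a (by simp))) A hA).inter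
        (Finset.measurableSet_biInter s fun k hk ↦ ?_)
      exact ℱ.mono (Int.le_sub_one_of_lt (has k hk)) _ (hGℱ k _ (ht k (by simp [hk])))
    have hindep := hG (a - 1)
    rw [sub_add_cancel] at hindep
    rw [Finset.set_biInter_insert, Set.inter_left_comm,
      (Indep_iff _ _ _).1 hindep _ _ (ht a (by simp)) hpast,
      ih (fun k hk ↦ hs k (by simp [hk])) (fun k hk ↦ ht k (by simp [hk])),
      Finset.prod_insert fun h ↦ lt_irrefl a (has a h)]
    ring

lemma iIndep_of_indep_succ [IsProbabilityMeasure P] (hGℱ : ∀ k, G k ≤ ℱ k)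
    (hG : ∀ n, Indep (G (n + 1)) (ℱ n) P) : iIndep G P := by
  refine (iIndep_iff _ _).2 fun s t ht ↦ ?_
  obtain ⟨b, hb⟩ := s.bddBelow
  simpa using measure_inter_biInter_eq_mul_prod_of_indep_succ hGℱ hG (n := b - 1)
    MeasurableSet.univ (fun k hk ↦ Int.sub_one_lt_of_le (hb hk)) ht

lemma indep_iSup_Ioi_of_indep_succ [IsProbabilityMeasure P] (hGℱ : ∀ k, G k ≤ ℱ k)
    (hG : ∀ n, Indep (G (n + 1)) (ℱ n) P) (n : ℤ) :
    Indep (ℱ n) (⨆ k ∈ Set.Ioi n, G k) P := by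
  refine IndepSets.indep (ℱ.le n) (iSup₂_le fun k _ ↦ (hGℱ k).trans (ℱ.le k))
    (@MeasurableSpace.isPiSystem_measurableSet Ω (ℱ n))
    (isPiSystem_piiUnionInter _ (fun k ↦ @MeasurableSpace.isPiSystem_measurableSet Ω (G k)) _)
    (@MeasurableSpace.generateFrom_measurableSet Ω (ℱ n)).symm
    (generateFrom_piiUnionInter_measurableSet G _).symm ?_
  rw [IndepSets_iff]
  rintro A _ hA ⟨s, hs, t, ht, rfl⟩
  have h : ∀ B, MeasurableSet[ℱ n] B → P (B ∩ ⋂ k ∈ s, t k) = P B * ∏ k ∈ s, P (t k) :=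
    fun B hB ↦ measure_inter_biInter_eq_mul_prod_of_indep_succ hGℱ hG hB (fun k hk ↦ hs hk) ht
  rw [h A hA, ← one_mul (∏ k ∈ s, P (t k)), ← measure_univ (μ := P), ← h _ MeasurableSet.univ,
    Set.univ_inter]

end IndepOfPast

lemma measure_preimage_neg_eq_of_measure_preimage_one_eq_half [IsProbabilityMeasure P]
    {Y : Ω → ℤ} (hY : Measurable Y) (hY₁ : ∀ ω, Y ω = 1 ∨ Y ω = -1)
    (hhalf : P (Y ⁻¹' {1}) = 2⁻¹) (b : ℤ) :
    P (Y ⁻¹' {-b}) = P (Y ⁻¹' {b}) := by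
  have hneg : P (Y ⁻¹' {-1}) = 2⁻¹ := by
    have := measure_inter_preimage_one_add_neg_one (P := P) hY hY₁ Set.univ
    rw [Set.univ_inter, Set.univ_inter, hhalf, measure_univ] at this
    rw [← ENNReal.one_sub_inv_two, ← this, ENNReal.add_sub_cancel_left (by simp)]
  have hempty : ∀ c, c ≠ 1 → c ≠ -1 → Y ⁻¹' {c} = ∅ := fun c h1 h2 ↦
    Set.eq_empty_of_forall_notMem fun ω hω ↦ by rcases hY₁ ω with h | h <;> simp_all
  by_cases h1 : b = 1
  · rw [h1, hneg, hhalf]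
  by_cases h2 : b = -1
  · rw [h2, neg_neg, hneg, hhalf]
  rw [hempty b h1 h2, hempty (-b) (by omega) (by omega)]

/-- `X` is a Markov chain on `{-1, 1}`, adapted to `ℱ`, that keeps its sign with probability `p`
(the conditional expectation is taken with respect to all of `ℱ n`, not just `X n`). -/
structure IsSymmetricSignChain (P : Measure Ω) (ℱ : Filtration ℤ mΩ) (p : ℝ)
    (X : ℤ → Ω → ℤ) : Prop where
  nonneg : 0 ≤ p
  le_one : p ≤ 1
  measurable : ∀ n, Measurable[ℱ n] (X n)
  eq_one_or_eq_neg_one : ∀ n ω, X n ω = 1 ∨ X n ω = -1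
  condExp_indicator : ∀ n y, y = 1 ∨ y = -1 →
    P[{ω | X (n + 1) ω = y}.indicator (fun _ ↦ (1 : ℝ)) | ℱ n]
      =ᵐ[P] fun ω ↦ if X n ω = y then p else 1 - p

namespace IsSymmetricSignChain

variable {ℱ : Filtration ℤ mΩ} {p : ℝ} {X V : ℤ → Ω → ℤ}

lemma increment_eq_one_or_eq_neg_one (hX : IsSymmetricSignChain P ℱ p X)
    (hV : ∀ n ω, V n ω = X (n - 1) ω * X n ω) (n : ℤ) (ω : Ω) : V n ω = 1 ∨ V n ω = -1 := by
  rw [hV]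
  exact Int.isUnit_iff.1 <| (Int.isUnit_iff.2 (hX.eq_one_or_eq_neg_one _ ω)).mul
    (Int.isUnit_iff.2 (hX.eq_one_or_eq_neg_one _ ω))

lemma measurable' (hX : IsSymmetricSignChain P ℱ p X) (n : ℤ) : Measurable (X n) :=
  (hX.measurable n).mono (ℱ.le n) le_rfl

lemma measurable_increment (hX : IsSymmetricSignChain P ℱ p X)
    (hV : ∀ n ω, V n ω = X (n - 1) ω * X n ω) (n : ℤ) : Measurable[ℱ n] (V n) := by
  rw [show V n = X (n - 1) * X n from funext (hV n)]
  exact ((hX.measurable _).mono (ℱ.mono (by omega)) le_rfl).mul (hX.measurable n)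

lemma measurable_increment' (hX : IsSymmetricSignChain P ℱ p X)
    (hV : ∀ n ω, V n ω = X (n - 1) ω * X n ω) (n : ℤ) : Measurable (V n) :=
  (hX.measurable_increment hV n).mono (ℱ.le n) le_rfl

lemma measure_preimage_increment_inter [IsFiniteMeasure P] (hX : IsSymmetricSignChain P ℱ p X)
    (hV : ∀ n ω, V n ω = X (n - 1) ω * X n ω) (n : ℤ) {v : ℤ} (hv : v = 1 ∨ v = -1)
    {B : Set Ω} (hB : MeasurableSet[ℱ n] B) :
    P (V (n + 1) ⁻¹' {v} ∩ B) = ENNReal.ofReal (if v = 1 then p else 1 - p) * P B := by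
  have hc : 0 ≤ if v = 1 then p else 1 - p := by
    split_ifs <;> linarith [hX.nonneg, hX.le_one]
  have hfiber : ∀ y, y = 1 ∨ y = -1 → P (V (n + 1) ⁻¹' {v} ∩ B ∩ X n ⁻¹' {y})
      = ENNReal.ofReal (if v = 1 then p else 1 - p) * P (B ∩ X n ⁻¹' {y}) := by
    intro y hy
    have hset :
        V (n + 1) ⁻¹' {v} ∩ B ∩ X n ⁻¹' {y} = B ∩ X n ⁻¹' {y} ∩ X (n + 1) ⁻¹' {y * v} := by
      ext ω
      simp only [Set.mem_inter_iff, Set.mem_preimage, Set.mem_singleton_iff, hV,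
        add_sub_cancel_right]
      rcases hy with rfl | rfl <;> grind
    rw [hset]
    refine measure_inter_eq_ofReal_mul_of_condExp_indicator_ae_eq (ℱ.le n)
      (hX.measurable' _ (measurableSet_singleton _))
      (hB.inter (hX.measurable n (measurableSet_singleton y))) hc
      (hX.condExp_indicator n (y * v) ?_) fun ω hω ↦ ?_
    · rcases hy with rfl | rfl <;> rcases hv with rfl | rfl <;> norm_num
    · simp only [Set.mem_inter_iff, Set.mem_preimage, Set.mem_singleton_iff] at hω
      rw [hω.2]
      rcases hy with rfl | rfl <;> rcases hv with rfl | rfl <;> norm_num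
  rw [← measure_inter_preimage_one_add_neg_one (hX.measurable' n) (hX.eq_one_or_eq_neg_one n),
    hfiber 1 (.inl rfl), hfiber (-1) (.inr rfl), ← mul_add,
    measure_inter_preimage_one_add_neg_one (hX.measurable' n) (hX.eq_one_or_eq_neg_one n)]

lemma indep_comap_increment_succ [IsProbabilityMeasure P] (hX : IsSymmetricSignChain P ℱ p X)
    (hV : ∀ n ω, V n ω = X (n - 1) ω * X n ω) (n : ℤ) :
    Indep (MeasurableSpace.comap (V (n + 1)) inferInstance) (ℱ n) P := by
  refine indep_comap_of_measure_inter_preimage_singleton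
    (hX.measurable_increment' hV _) fun v B hB ↦ ?_
  by_cases hv : v = 1 ∨ v = -1
  · rw [hX.measure_preimage_increment_inter hV n hv hB, ← Set.inter_univ (V (n + 1) ⁻¹' {v}),
      hX.measure_preimage_increment_inter hV n hv MeasurableSet.univ, measure_univ, mul_one]
  · have : V (n + 1) ⁻¹' {v} = ∅ := Set.eq_empty_of_forall_notMem fun ω (hω : V (n + 1) ω = v) ↦
      hv (hω ▸ hX.increment_eq_one_or_eq_neg_one hV _ ω)
    simp [this]

lemma measure_preimage_increment [IsProbabilityMeasure P] (hX : IsSymmetricSignChain P ℱ p X)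
    (hV : ∀ n ω, V n ω = X (n - 1) ω * X n ω) (n : ℤ) {v : ℤ} (hv : v = 1 ∨ v = -1) :
    P (V n ⁻¹' {v}) = ENNReal.ofReal (if v = 1 then p else 1 - p) := by
  obtain ⟨n, rfl⟩ : ∃ m, n = m + 1 := ⟨n - 1, by ring⟩
  simpa using hX.measure_preimage_increment_inter hV n hv MeasurableSet.univ

lemma indep_comap_iSup_Ioi_comap_increment [IsProbabilityMeasure P]
    (hX : IsSymmetricSignChain P ℱ p X) (hV : ∀ n ω, V n ω = X (n - 1) ω * X n ω)
    (hsymm : ∀ n b, P (X n ⁻¹' {-b}) = P (X n ⁻¹' {b})) {m n : ℤ} (hmn : m ≤ n) :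
    Indep (MeasurableSpace.comap (X n) inferInstance)
      (⨆ k ∈ Set.Ioi m, MeasurableSpace.comap (V k) inferInstance) P := by
  induction n, hmn using Int.leInduction with
  | base =>
    exact indep_of_indep_of_le_left (indep_iSup_Ioi_of_indep_succ
      (fun k ↦ (hX.measurable_increment hV k).comap_le) (hX.indep_comap_increment_succ hV) m)
      (hX.measurable m).comap_le
  | succ n hmn ih =>
    have hXsucc : X (n + 1) = X n * V (n + 1) := funext fun ω ↦ by
      rw [Pi.mul_apply, hV, add_sub_cancel_right, ← mul_assoc]
      rcases hX.eq_one_or_eq_neg_one n ω with h | h <;> simp [h]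
    rw [hXsucc]
    exact indep_comap_mul_of_indep
      (iSup₂_le fun k _ ↦ (hX.measurable_increment' hV k).comap_le)
      (hX.measurable' n)
      (.of_comap_le (le_iSup₂_of_le (n + 1) (show m < n + 1 by omega) le_rfl))
      (hX.increment_eq_one_or_eq_neg_one hV _) (hsymm n) ih

lemma indep_comap_iSup_comap_increment [IsProbabilityMeasure P]
    (hX : IsSymmetricSignChain P ℱ p X) (hV : ∀ n ω, V n ω = X (n - 1) ω * X n ω)
    (hsymm : ∀ n b, P (X n ⁻¹' {-b}) = P (X n ⁻¹' {b})) (n : ℤ) :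
    Indep (MeasurableSpace.comap (X n) inferInstance)
      (⨆ k, MeasurableSpace.comap (V k) inferInstance) P := by
  have hsup : (⨆ k, MeasurableSpace.comap (V k) inferInstance)
      = ⨆ m, ⨆ k ∈ Set.Ioi m, MeasurableSpace.comap (V k) inferInstance :=
    le_antisymm
      (iSup_le fun k ↦ le_iSup_of_le (k - 1) (le_iSup₂_of_le k (show k - 1 < k by omega) le_rfl))
      (iSup_le fun m ↦ iSup₂_le fun k _ ↦ le_iSup_of_le k le_rfl)
  have hanti : Antitone fun m ↦ ⨆ k ∈ Set.Ioi m, MeasurableSpace.comap (V k) inferInstance :=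
    fun a b hab ↦ biSup_mono fun k (hk : b < k) ↦ (lt_of_le_of_lt hab hk : a < k)
  have hindep : ∀ m, Indep (⨆ k ∈ Set.Ioi m, MeasurableSpace.comap (V k) inferInstance)
      (MeasurableSpace.comap (X n) inferInstance) P := fun m ↦
    (indep_of_indep_of_le_right
      (hX.indep_comap_iSup_Ioi_comap_increment hV hsymm (min_le_right m n))
      (hanti (min_le_left m n))).symm
  rw [hsup]
  exact (indep_iSup_of_antitone hindep
    (fun m ↦ iSup₂_le fun k _ ↦ (hX.measurable_increment' hV k).comap_le)
    (hX.measurable' n).comap_le hanti).symm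

end IsSymmetricSignChain

lemma iSup_comap_le_eq_iSup_comap_increment_le_sup_comap {X V : ℤ → Ω → ℤ}
    (hX₁ : ∀ n ω, X n ω = 1 ∨ X n ω = -1) (hV : ∀ n ω, V n ω = X (n - 1) ω * X n ω) (n : ℤ) :
    (⨆ k : ℤ, ⨆ _ : k ≤ n, MeasurableSpace.comap (X k) inferInstance) =
      (⨆ k : ℤ, ⨆ _ : k ≤ n, MeasurableSpace.comap (V k) inferInstance) ⊔
        MeasurableSpace.comap (X n) inferInstance := by
  have hXle : ∀ j ≤ n,
      Measurable[⨆ k : ℤ, ⨆ _ : k ≤ n, MeasurableSpace.comap (X k) inferInstance] (X j) :=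
    fun j hj ↦ .of_comap_le (le_iSup₂_of_le j hj le_rfl)
  refine le_antisymm (iSup₂_le fun k hk ↦ Measurable.comap_le ?_)
    (sup_le (iSup₂_le fun k hk ↦ Measurable.comap_le ?_) (hXle n le_rfl).comap_le)
  · induction k, hk using Int.leInductionDown with
    | base => exact .of_comap_le le_sup_right
    | pred k hk ih =>
      have hXpred : X (k - 1) = V k * X k := funext fun ω ↦ by
        rw [Pi.mul_apply, hV, mul_assoc]
        rcases hX₁ k ω with h | h <;> simp [h]
      rw [hXpred]
      exact (Measurable.of_comap_le (le_sup_of_le_left (le_iSup₂_of_le k hk le_rfl))).mul ih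
  · rw [show V k = X (k - 1) * X k from funext (hV k)]
    exact (hXle _ (by omega)).mul (hXle k hk)

end ProbabilityTheory

/-- Vinokourov's example: let `(X_n)_{n ∈ ℤ}` be a stationary Markov chain
on `{-1, 1}` with transitions `p(1,1) = p(-1,-1) = p ∈ (0,1)`,
`p(1,-1) = p(-1,1) = 1 - p`, and set `V_{n+1} = X_n X_{n+1}`. Then:
(a) the `V_n` are i.i.d. of law `p δ_1 + (1-p) δ_{-1}`, and `V_{n+1}` is independent of
`σ(X_k : k ≤ n)`; (b) `X_n` is independent of `σ(V_k : k ∈ ℤ)` and uniform on `{-1,1}`;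
(c) `σ(X_k : k ≤ n) = σ(V_k : k ≤ n) ⊔ σ(X_n)`. -/
theorem stmt_15 {Ω : Type*} [MeasurableSpace Ω] (P : Measure Ω) [IsProbabilityMeasure P]
    (p : ℝ) (hp : 0 < p) (hp1 : p < 1)
    (X : ℤ → Ω → ℤ) (hXmeas : ∀ n, Measurable (X n))
    (hXval : ∀ n ω, X n ω = 1 ∨ X n ω = -1)
    (hmarg : ∀ n : ℤ, P {ω | X n ω = 1} = 2⁻¹)
    (hMarkov : ∀ n : ℤ, ∀ y : ℤ, y = 1 ∨ y = -1 →
      P[(Set.indicator {ω | X (n + 1) ω = y} fun _ => (1 : ℝ)) |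
          ⨆ k : ℤ, ⨆ _ : k ≤ n, MeasurableSpace.comap (X k) inferInstance]
        =ᵐ[P] fun ω => if X n ω = y then p else 1 - p)
    (V : ℤ → Ω → ℤ) (hVdef : ∀ n ω, V n ω = X (n - 1) ω * X n ω) :
    (iIndepFun V P ∧
      (∀ n : ℤ, P {ω | V n ω = 1} = ENNReal.ofReal p ∧
        P {ω | V n ω = -1} = ENNReal.ofReal (1 - p)) ∧
      ∀ n : ℤ, Indep (MeasurableSpace.comap (V (n + 1)) inferInstance)
        (⨆ k : ℤ, ⨆ _ : k ≤ n, MeasurableSpace.comap (X k) inferInstance) P) ∧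
    (∀ n : ℤ, Indep (MeasurableSpace.comap (X n) inferInstance)
        (⨆ k : ℤ, MeasurableSpace.comap (V k) inferInstance) P ∧
      P {ω | X n ω = 1} = 2⁻¹ ∧ P {ω | X n ω = -1} = 2⁻¹) ∧
    (∀ n : ℤ, (⨆ k : ℤ, ⨆ _ : k ≤ n, MeasurableSpace.comap (X k) inferInstance) =
      (⨆ k : ℤ, ⨆ _ : k ≤ n, MeasurableSpace.comap (V k) inferInstance) ⊔
        MeasurableSpace.comap (X n) inferInstance) := by
  let ℱ := Filtration.natural X fun n ↦ (hXmeas n).stronglyMeasurable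
  have hX : IsSymmetricSignChain P ℱ p X :=
    { nonneg := hp.le
      le_one := hp1.le
      measurable := fun n ↦
        (Filtration.stronglyAdapted_natural (fun n ↦ (hXmeas n).stronglyMeasurable) n).measurable
      eq_one_or_eq_neg_one := hXval
      condExp_indicator := hMarkov }
  have hsymm : ∀ n b, P (X n ⁻¹' {-b}) = P (X n ⁻¹' {b}) :=
    fun n ↦ measure_preimage_neg_eq_of_measure_preimage_one_eq_half (hXmeas n) (hXval n) (hmarg n)
  have hindep := hX.indep_comap_increment_succ hVdef
  refine ⟨⟨?_, fun n ↦ ⟨?_, ?_⟩, hindep⟩,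
    fun n ↦ ⟨hX.indep_comap_iSup_comap_increment hVdef hsymm n, hmarg n,
      (hsymm n 1).trans (hmarg n)⟩,
    iSup_comap_le_eq_iSup_comap_increment_le_sup_comap hXval hVdef⟩
  · exact (iIndepFun_iff_iIndep _ _ _).2
      (iIndep_of_indep_succ (fun k ↦ (hX.measurable_increment hVdef k).comap_le) hindep)
  · exact (hX.measure_preimage_increment hVdef n (.inl rfl)).trans (by rw [if_pos rfl])
  · exact (hX.measure_preimage_increment hVdef n (.inr rfl)).trans (by rw [if_neg (by norm_num)])
end

section
/- (Counterexample to necessity of Rosenblatt's condition on an infinite state space.) Let $E=\mathbf{N}$, $f_1(x)=\max(x-1,0)$ and $f_2(x)=x+1$. Then: (a) no finite composition of $f_1$'s and $f_2$'s is a constant map on $\mathbf{N}$; (b) for every $l\ge 1$, the iterate $f_1^l$ maps $\{0,1,\dots,l\}$ to $\{0\}$; hence for i.i.d. innovations $V_n$ with $P[V_n=1]=2/3$, $P[V_n=2]=1/3$, any two states $x,y\in\mathbf{N}$ are accordable, i.e., there is $l$ with $P[f_{V_l}\circ\cdots\circ f_{V_1}(x)=f_{V_l}\circ\cdots\circ f_{V_1}(y)]>0$.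 -/
/-!
Every step lowers the state by at most one, so a composition of length `n` sends `x` to at
least `x - n` and cannot be constant. On the other hand `n ≥ max x y` applications of `f₁`
send both `x` and `y` to `0`, and the all-`f₁` word has probability `(2/3)ⁿ > 0`.
-/

open MeasureTheory
open scoped ENNReal

theorem List.foldl_replicate {α β : Type*} (f : β → α → β) (n : ℕ) (a : α) (b : β) :
    (replicate n a).foldl f b = (fun b => f b a)^[n] b := by
  induction n generalizing b with
  | zero => rfl
  | succ n ih => simp only [replicate_succ, foldl_cons, ih, Function.iterate_succ_apply]

section Descent

variable {ι : Type*} {g : ι → ℕ → ℕ}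

theorem sub_length_le_foldl (hg : ∀ i x, x ≤ g i x + 1) (vs : List ι) (x : ℕ) :
    x - vs.length ≤ vs.foldl (fun a i => g i a) x := by
  induction vs generalizing x with
  | nil => simp
  | cons i vs ih =>
    have := ih (g i x)
    have := hg i x
    simp only [List.length_cons, List.foldl_cons]
    omega

theorem not_exists_foldl_eq_const (hg : ∀ i x, x ≤ g i x + 1) (vs : List ι) :
    ¬ ∃ c, ∀ x, vs.foldl (fun a i => g i a) x = c := by
  rintro ⟨c, hc⟩
  have := sub_length_le_foldl hg vs (c + vs.length + 1)
  rw [hc] at this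
  omega

end Descent

theorem Nat.sub_one_iterate_of_le {l x : ℕ} (hx : x ≤ l) : (fun x => x - 1)^[l] x = 0 := by
  change pred^[l] x = 0
  rw [Nat.pred_iterate]
  omega

theorem MeasureTheory.Measure.pi_const_singleton_pos {ι α : Type*} [Fintype ι]
    [MeasurableSpace α] (β : Measure α) [SigmaFinite β] {a : α} (ha : β {a} ≠ 0) :
    0 < Measure.pi (fun _ : ι => β) {fun _ => a} := by
  rw [Measure.pi_singleton, pos_iff_ne_zero, Finset.prod_ne_zero_iff]
  exact fun _ _ => ha

theorem stmt_18_general (f : Fin 2 → ℕ → ℕ)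
    (hf1 : f 0 = fun x => x - 1) (hf2 : f 1 = fun x => x + 1)
    (β : Measure (Fin 2)) [IsProbabilityMeasure β]
    (hβ1 : β {0} = 2/3) :
    (∀ vs : List (Fin 2), ¬ ∃ c : ℕ, ∀ x : ℕ, vs.foldl (fun a i => f i a) x = c) ∧
    (∀ l : ℕ, ∀ x ≤ l, (f 0)^[l] x = 0) ∧
    (∀ x y : ℕ, ∃ l : ℕ, 0 < l ∧
      0 < Measure.pi (fun _ : Fin l => β)
        {v : Fin l → Fin 2 |
          (List.ofFn v).foldl (fun a i => f i a) x =
            (List.ofFn v).foldl (fun a i => f i a) y}) := by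
  have hdescent : ∀ i x, x ≤ f i x + 1 := by
    intro i x
    fin_cases i <;> simp [hf1, hf2] <;> omega
  have hmerge : ∀ l, ∀ x ≤ l, (f 0)^[l] x = 0 := fun l x hx => hf1 ▸ Nat.sub_one_iterate_of_le hx
  refine ⟨not_exists_foldl_eq_const hdescent, hmerge, fun x y => ⟨max x y + 1, by omega, ?_⟩⟩
  refine (Measure.pi_const_singleton_pos β (a := 0) (by simp [hβ1])).trans_le (measure_mono ?_)
  rintro _ rfl
  simp only [Set.mem_ofPred_eq, List.ofFn_const, List.foldl_replicate]
  rw [hmerge _ x (by omega), hmerge _ y (by omega)]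

/-- counterexample to the necessity of Rosenblatt's condition on an
infinite state space: on `E = ℕ`, with `f₁ x = max (x-1) 0` and `f₂ x = x + 1`,
(a) no finite composition of `f₁`'s and `f₂`'s is constant; (b) `f₁^[l]` maps
`{0,…,l}` to `{0}`; hence, for i.i.d. innovations of law `β` with `β{1} = 2/3` and
`β{2} = 1/3`, any two states are accordable: some random composition merges them
with positive probability. -/
theorem stmt_18 (f : Fin 2 → ℕ → ℕ)
    (hf1 : f 0 = fun x => x - 1) (hf2 : f 1 = fun x => x + 1)
    (β : Measure (Fin 2)) [IsProbabilityMeasure β]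
    (hβ1 : β {0} = 2/3) (hβ2 : β {1} = 1/3) :
    (∀ vs : List (Fin 2), ¬ ∃ c : ℕ, ∀ x : ℕ, vs.foldl (fun a i => f i a) x = c) ∧
    (∀ l : ℕ, ∀ x ≤ l, (f 0)^[l] x = 0) ∧
    (∀ x y : ℕ, ∃ l : ℕ, 0 < l ∧
      0 < Measure.pi (fun _ : Fin l => β)
        {v : Fin l → Fin 2 |
          (List.ofFn v).foldl (fun a i => f i a) x =
            (List.ofFn v).foldl (fun a i => f i a) y}) :=
  stmt_18_general f hf1 hf2 β hβ1
end
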